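/- arXiv:2301.04949 — 6 statements merged into one kernel-verified Lean document; each statement's English description precedes it below -/
import Mathlib

section
/- Let X = {x_0,...,x_m} and X' = {x'_0,...,x'_q}, and for c ∈ ℝ^q⟨⟨X⟩⟩ and purely improper d ∈ ℝ^m⟨⟨X'⟩⟩ define the multiplicative dynamic feedback product c @̌ d := c ⟲ (d^{⧢-1} ∘ c)^{⋆-1}. Then @̌ is a right group action of the group of purely improper tuples (ℝ^m⟨⟨X'⟩⟩ purely improper, ⧢, 1l) on ℝ^q⟨⟨X⟩⟩: c @̌ 1l = c, and (c @̌ d₁) @̌ d₂ = c @̌ (d₁ ⧢ d₂) for all purely improper d₁, d₂ ∈ ℝ^m⟨⟨X'⟩⟩. -/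
open scoped BigOperators

namespace CFS

noncomputable section

/-- The alphabet `X = {x_0, x_1, ..., x_m}`: `none` encodes `x_0`, `some i` encodes `x_{i+1}`. -/
abbrev Letter (m : ℕ) := Option (Fin m)

/-- Words over the alphabet `X`. -/
abbrev Word (m : ℕ) := List (Letter m)

/-- Formal power series `ℝ⟨⟨X⟩⟩`: coefficient functions on words. -/
abbrev FPS (m : ℕ) := Word m → ℝ

/-- Tuples of series `ℝ^ℓ⟨⟨X⟩⟩`. -/
abbrev FPST (m ℓ : ℕ) := Fin ℓ → FPS m

/-- The series `𝟙` (coefficient 1 at the empty word). -/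
def unit (m : ℕ) : FPS m := fun w => if w = [] then 1 else 0

/-- The tuple `1l = (𝟙,...,𝟙)`. -/
def unitT (m ℓ : ℕ) : FPST m ℓ := fun _ => unit m

/-- Left concatenation of a series by the letter `x`. -/
def lc {m : ℕ} (x : Letter m) (c : FPS m) : FPS m :=
  fun w => match w with
  | [] => 0
  | y :: u => if y = x then c u else 0

/-- The shuffle product `c ⧢ d`, given by the coefficientwise recursion dual to the
word recursion `(x u) ⧢ (y v) = x(u ⧢ (y v)) + y((x u) ⧢ v)`, `𝟙 ⧢ η = η ⧢ 𝟙 = η`: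
left shifts act as derivations. -/
def sh {m : ℕ} : FPS m → FPS m → FPS m
  | c, d, [] => c [] * d []
  | c, d, x :: w => sh (fun u => c (x :: u)) d w + sh c (fun u => d (x :: u)) w

/-- Componentwise shuffle on tuples. -/
def shT {m ℓ : ℕ} (c d : FPST m ℓ) : FPST m ℓ := fun i => sh (c i) (d i)

/-- A tuple is purely improper when each component has a nonzero constant coefficient. -/
def PurelyImproper {m ℓ : ℕ} (c : FPST m ℓ) : Prop := ∀ i, c i [] ≠ 0

/-- `η ⟲ d` on a word `η`. -/
def wmc {m : ℕ} (d : FPST m m) : Word m → FPS m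
  | [] => unit m
  | none :: η => lc none (wmc d η)
  | some i :: η => lc (some i) (sh (d i) (wmc d η))

/-- Multiplicative mixed composition product `c ⟲ d := Σ_η c(η)(η ⟲ d)`.
Since `η ⟲ d` is supported on words of length `≥ |η|`, only words `η` of length
`≤ |w|` contribute to the coefficient at `w`. -/
def mc {m : ℕ} (c : FPS m) (d : FPST m m) : FPS m :=
  fun w => ∑ k ∈ Finset.range (w.length + 1),
    ∑ η : Fin k → Letter m, c (List.ofFn η) * wmc d (List.ofFn η) w

/-- `⟲` on tuples (componentwise in the left argument). -/
def mcT {m ℓ : ℕ} (c : FPST m ℓ) (d : FPST m m) : FPST m ℓ := fun i => mc (c i) d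

/-- `ψ_d(η)(𝟙)`, where `ψ_d(x'_0)(e) = x_0(𝟙 ⧢ e)` and `ψ_d(x'_i)(e) = x_0(d_i ⧢ e)`. -/
def wcomp {m ℓ : ℕ} (d : FPST m ℓ) : Word ℓ → FPS m
  | [] => unit m
  | none :: η => lc none (sh (unit m) (wcomp d η))
  | some i :: η => lc none (sh (d i) (wcomp d η))

/-- Composition product `c ∘ d := Σ_η c(η) ψ_d(η)(𝟙)`; since `ψ_d(η)(𝟙)` is supported
on words of length `≥ |η|`, only `η` with `|η| ≤ |w|` contribute at `w`. -/
def comp {m ℓ : ℕ} (c : FPS ℓ) (d : FPST m ℓ) : FPS m :=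
  fun w => ∑ k ∈ Finset.range (w.length + 1),
    ∑ η : Fin k → Letter ℓ, c (List.ofFn η) * wcomp d (List.ofFn η) w

/-- `∘` componentwise in the left argument. -/
def compT {m ℓ q : ℕ} (c : FPST ℓ q) (d : FPST m ℓ) : FPST m q := fun i => comp (c i) d

/-- Multiplicative composition product `c ⋆ d := d ⧢ (c ⟲ d)`. -/
def star {m : ℕ} (c d : FPST m m) : FPST m m := fun i => sh (d i) (mc (c i) d)

/-- Iteration of `e ↦ c(𝟙)⁻¹ ⬝ (𝟙 − c' ⧢ e)` (with `c'` the proper part of `c`),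
whose fixed point is the shuffle inverse of `c` when `c(𝟙) ≠ 0`. -/
def shInvAux {m : ℕ} (c : FPS m) : ℕ → FPS m
  | 0 => fun _ => 0
  | n + 1 => fun w =>
      (c [])⁻¹ * (unit m w - sh (fun u => if u = [] then 0 else c u) (shInvAux c n) w)

/-- Shuffle inverse `c^{⧢-1}` (the coefficient at `w` stabilizes after `|w|+1` iterations). -/
def shInv {m : ℕ} (c : FPS m) : FPS m := fun w => shInvAux c (w.length + 1) w

/-- Componentwise shuffle inverse of a tuple. -/
def shInvT {m ℓ : ℕ} (c : FPST m ℓ) : FPST m ℓ := fun i => shInv (c i)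

/-- Iteration of the strong contraction `e ↦ d^{⧢-1} ⟲ e`, whose fixed point is `d^{⋆-1}`. -/
def starInvAux {m : ℕ} (d : FPST m m) : ℕ → FPST m m
  | 0 => fun _ _ => 0
  | n + 1 => mcT (shInvT d) (starInvAux d n)

/-- `⋆`-inverse `d^{⋆-1}` of a purely improper tuple. -/
def starInv {m : ℕ} (d : FPST m m) : FPST m m := fun i w => starInvAux d (w.length + 1) i w

/-- Multiplicative dynamic feedback product `c @̌ d := c ⟲ (d^{⧢-1} ∘ c)^{⋆-1}`. -/
def fb {m q : ℕ} (c : FPST m q) (d : FPST q m) : FPST m q :=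
  mcT c (starInv (compT (shInvT d) c))

/-- Valuation: minimal length of a word in the support (`⊤` for the zero series). -/
def val {m : ℕ} (c : FPS m) : ℕ∞ :=
  sInf ((fun w : Word m => (w.length : ℕ∞)) '' {w | c w ≠ 0})

/-- Valuation of a tuple: minimum over components. -/
def valT {m ℓ : ℕ} (c : FPST m ℓ) : ℕ∞ := ⨅ i, val (c i)

/-- `σ^v` for `v : ℕ∞`, with `σ^∞ = 0`; so `κ(a,b) = enpow σ (val (a-b))`. -/
def enpow (σ : ℝ) (v : ℕ∞) : ℝ := if v = ⊤ then 0 else σ ^ v.toNat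

/-- The natural part `c_N`: restriction of `c` to words in the letter `x_0` only. -/
def natPart {m : ℕ} (c : FPS m) : FPS m :=
  fun w => if ∀ x ∈ w, x = (none : Letter m) then c w else 0

/-- The forced part `c_F := c − c_N`. -/
def forcedPart {m : ℕ} (c : FPS m) : FPS m := fun w => c w - natPart c w

/-- `c` has (finite) class `r ≥ 1`: `supp(c_F) ⊆ x_0^{r-1}X^+` and `supp(c_F) ⊄ x_0^r X^+`. -/
def hasClassF {m : ℕ} (c : FPS m) (r : ℕ) : Prop :=
  1 ≤ r ∧
  (∀ w, forcedPart c w ≠ 0 → ∃ v, v ≠ [] ∧ w = List.replicate (r - 1) (none : Letter m) ++ v) ∧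
  ¬ (∀ w, forcedPart c w ≠ 0 → ∃ v, v ≠ [] ∧ w = List.replicate r (none : Letter m) ++ v)

/-- `𝒞(c) = r` for `r : ℕ∞`, with `𝒞(c) = ∞` iff `c_F = 0`. -/
def hasClass {m : ℕ} (c : FPS m) (r : ℕ∞) : Prop :=
  (r = ⊤ ∧ forcedPart c = fun _ => 0) ∨ ∃ n : ℕ, r = (n : ℕ∞) ∧ hasClassF c n

/-- `c` has relative degree `r`: `𝒞(c) = r` and `x_0^{r-1} x_1 ∈ supp(c_F)`. -/
def hasRelDeg (c : FPS 1) (r : ℕ) : Prop :=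
  hasClassF c r ∧
  forcedPart c (List.replicate (r - 1) (none : Letter 1) ++ [some 0]) ≠ 0

/-- `⟲` for single (SISO, `m = 1`) series. -/
def mc1 (c d : FPS 1) : FPS 1 := mc c (fun _ => d)

/-- The multiplicative dynamic feedback product for single (SISO) series. -/
def fb1 (c d : FPS 1) : FPS 1 :=
  mc c (starInv (compT (fun _ : Fin 1 => shInv d) (fun _ : Fin 1 => c)))

end

end CFS

namespace CFS
noncomputable section
variable {m ℓ : ℕ}

lemma sh_nil (c d : FPS m) : sh c d [] = c [] * d [] := rfl

lemma sh_cons (c d : FPS m) (x : Letter m) (w : Word m) :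
    sh c d (x :: w) = sh (fun u => c (x :: u)) d w + sh c (fun u => d (x :: u)) w := rfl

lemma sh_congr {c c' d d' : FPS m} {w : Word m}
    (hc : ∀ u : Word m, u.length ≤ w.length → c u = c' u)
    (hd : ∀ u : Word m, u.length ≤ w.length → d u = d' u) :
    sh c d w = sh c' d' w := by
  induction w generalizing c c' d d' with
  | nil => simp only [sh_nil, hc [] (le_refl _), hd [] (le_refl _)]
  | cons x w ih =>
      rw [sh_cons, sh_cons,
        ih (fun u hu => hc (x :: u) (by simpa using Nat.succ_le_succ hu))
           (fun u hu => hd u (le_trans hu (Nat.le_succ _))),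
        ih (fun u hu => hc u (le_trans hu (Nat.le_succ _)))
           (fun u hu => hd (x :: u) (by simpa using Nat.succ_le_succ hu))]

lemma sh_add_right (c d e : FPS m) (w : Word m) :
    sh c (fun u => d u + e u) w = sh c d w + sh c e w := by
  induction w generalizing c d e with
  | nil => simp only [sh_nil]; ring
  | cons x w ih => simp only [sh_cons]; rw [ih, ih]; ring

lemma sh_mul_right (c : FPS m) (a : ℝ) (d : FPS m) (w : Word m) :
    sh c (fun u => a * d u) w = a * sh c d w := by
  induction w generalizing c d with
  | nil => simp only [sh_nil]; ring
  | cons x w ih => simp only [sh_cons]; rw [ih, ih]; ring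

lemma sh_zero_right (c : FPS m) (w : Word m) : sh c (fun _ => (0:ℝ)) w = 0 := by
  induction w generalizing c with
  | nil => simp [sh_nil]
  | cons x w ih => simp only [sh_cons]; rw [ih, ih]; ring

lemma sh_sum_right {ι : Type*} (c : FPS m) (s : Finset ι) (f : ι → FPS m) (w : Word m) :
    sh c (fun u => ∑ i ∈ s, f i u) w = ∑ i ∈ s, sh c (f i) w := by
  classical
  induction s using Finset.induction with
  | empty => simpa using sh_zero_right c w
  | insert a s h ih =>
      have h1 : (fun u => ∑ i ∈ insert a s, f i u) = fun u => f a u + ∑ i ∈ s, f i u := by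
        funext u; rw [Finset.sum_insert h]
      rw [h1, sh_add_right, ih, Finset.sum_insert h]

lemma sh_comm (c d : FPS m) (w : Word m) : sh c d w = sh d c w := by
  induction w generalizing c d with
  | nil => simp [sh_nil, mul_comm]
  | cons x w ih => rw [sh_cons, sh_cons, ih (fun u => c (x :: u)) d, ih c (fun u => d (x :: u)), add_comm]

lemma sh_add_left (c d e : FPS m) (w : Word m) :
    sh (fun u => c u + d u) e w = sh c e w + sh d e w := by
  rw [sh_comm, sh_add_right, sh_comm e c, sh_comm e d]

lemma sh_zero_left (d : FPS m) (w : Word m) : sh (fun _ => (0:ℝ)) d w = 0 := by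
  rw [sh_comm, sh_zero_right]

lemma sh_unit_left (d : FPS m) (w : Word m) : sh (unit m) d w = d w := by
  induction w generalizing d with
  | nil => simp [sh_nil, unit]
  | cons x w ih =>
      rw [sh_cons]
      rw [show (fun u : Word m => unit m (x :: u)) = (fun _ => (0:ℝ)) from funext fun u => by simp [unit]]
      rw [sh_zero_left, zero_add, ih]

lemma sh_delta_left (a : ℝ) (d : FPS m) (w : Word m) :
    sh (fun u : Word m => if u = [] then a else 0) d w = a * d w := by
  induction w generalizing d with
  | nil => simp [sh_nil]
  | cons x w ih =>
      rw [sh_cons]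
      rw [show (fun u : Word m => if ((x :: u : Word m) = []) then a else 0) = (fun _ => (0:ℝ)) from
        funext fun u => by simp]
      rw [sh_zero_left, zero_add, ih]

lemma sh_split_left (c d : FPS m) (w : Word m) :
    sh c d w = c [] * d w + sh (fun u => if u = [] then 0 else c u) d w := by
  have h : ∀ u : Word m, c u = (if u = [] then c [] else 0) + (if u = [] then 0 else c u) := by
    intro u; by_cases h : u = [] <;> simp [h]
  calc sh c d w
      = sh (fun u => (if u = [] then c [] else 0) + (if u = [] then 0 else c u)) d w :=
        sh_congr (fun u _ => h u) (fun _ _ => rfl)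
    _ = _ := by rw [sh_add_left, sh_delta_left]

lemma sh_assoc (c d e : FPS m) (w : Word m) :
    sh (sh c d) e w = sh c (sh d e) w := by
  induction w generalizing c d e with
  | nil => simp [sh_nil, mul_assoc]
  | cons x w ih =>
      rw [sh_cons, sh_cons]
      have h1 : sh (fun u => sh c d (x :: u)) e w
          = sh (fun u => sh (fun v => c (x :: v)) d u + sh c (fun v => d (x :: v)) u) e w := rfl
      have h2 : sh c (fun u => sh d e (x :: u)) w
          = sh c (fun u => sh (fun v => d (x :: v)) e u + sh d (fun v => e (x :: v)) u) w := rfl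
      rw [h1, h2, sh_add_left, sh_add_right, ih, ih, ih]
      ring

lemma sh_vanish_right (c d : FPS m) (n : ℕ) (h : ∀ v : Word m, v.length < n → d v = 0)
    (w : Word m) (hw : w.length < n) : sh c d w = 0 := by
  induction w generalizing c d n with
  | nil => simp [sh_nil, h [] hw]
  | cons x w ih =>
      simp only [List.length_cons] at hw
      rw [sh_cons, ih _ d n h (by omega),
        ih c (fun u => d (x :: u)) (n - 1) (fun v hv => h (x :: v) (by simp; omega)) (by omega)]
      ring

lemma sh_proper_congr (c d d' : FPS m) (hc : c [] = 0)
    (w : Word m) (hd : ∀ v : Word m, v.length < w.length → d v = d' v) :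
    sh c d w = sh c d' w := by
  induction w generalizing d d' with
  | nil => simp [sh_nil, hc]
  | cons x w ih =>
      rw [sh_cons, sh_cons]
      congr 1
      · exact sh_congr (fun _ _ => rfl) (fun u hu => hd u (by simp; omega))
      · exact ih _ _ (fun v hv => hd (x :: v) (by simp; omega))

end
end CFS

namespace CFS
noncomputable section
variable {m ℓ : ℕ}

lemma shInvAux_succ (c : FPS m) (n : ℕ) (w : Word m) :
    shInvAux c (n+1) w
      = (c [])⁻¹ * (unit m w - sh (fun u => if u = [] then 0 else c u) (shInvAux c n) w) := rfl

lemma shInvAux_stable (c : FPS m) : ∀ n k l : ℕ, n ≤ k → n ≤ l → ∀ w : Word m, w.length < n →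
    shInvAux c k w = shInvAux c l w := by
  intro n
  induction n with
  | zero => intro k l _ _ w hw; exact absurd hw (Nat.not_lt_zero _)
  | succ n ih =>
      intro k l hk hl w hw
      obtain ⟨k, rfl⟩ : ∃ k', k = k' + 1 := ⟨k - 1, by omega⟩
      obtain ⟨l, rfl⟩ : ∃ l', l = l' + 1 := ⟨l - 1, by omega⟩
      rw [shInvAux_succ, shInvAux_succ,
        sh_proper_congr _ (shInvAux c k) (shInvAux c l) (by simp) w
          (fun v hv => ih k l (by omega) (by omega) v (by omega))]

lemma shInv_eq (c : FPS m) (w : Word m) :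
    shInv c w = (c [])⁻¹ * (unit m w - sh (fun u => if u = [] then 0 else c u) (shInv c) w) := by
  have h1 : shInv c w = shInvAux c (w.length + 2) w :=
    shInvAux_stable c (w.length + 1) _ _ le_rfl (by omega) w (by omega)
  rw [h1, shInvAux_succ,
    sh_proper_congr _ (shInvAux c (w.length + 1)) (shInv c) (by simp) w
      (fun v hv => shInvAux_stable c (v.length + 1) _ _ (by omega) le_rfl v (by omega))]

lemma shInv_nil (c : FPS m) : shInv c [] = (c [])⁻¹ := by
  rw [shInv_eq]; simp [sh_nil, unit]

lemma sh_shInv (c : FPS m) (hc : c [] ≠ 0) (w : Word m) : sh c (shInv c) w = unit m w := by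
  rw [sh_split_left, shInv_eq, ← mul_assoc, mul_inv_cancel₀ hc, one_mul]
  ring

lemma shInv_unique (c e : FPS m) (hc : c [] ≠ 0) (he : ∀ w, sh c e w = unit m w) :
    ∀ w, e w = shInv c w := by
  suffices H : ∀ n : ℕ, ∀ w : Word m, w.length < n → e w = shInv c w from
    fun w => H (w.length + 1) w (by omega)
  intro n
  induction n with
  | zero => intro w hw; exact absurd hw (Nat.not_lt_zero _)
  | succ n ih =>
      intro w hw
      have h1 := he w
      rw [sh_split_left,
        sh_proper_congr _ e (shInv c) (by simp) w (fun v hv => ih v (by omega))] at h1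
      rw [shInv_eq]
      field_simp
      linarith [h1]

lemma shF_comm (c d : FPS m) : sh c d = sh d c := funext (sh_comm c d)

lemma shF_assoc (c d e : FPS m) : sh (sh c d) e = sh c (sh d e) := funext (sh_assoc c d e)

lemma shF_left_comm (c d e : FPS m) : sh c (sh d e) = sh d (sh c e) := by
  rw [← shF_assoc, shF_comm c d, shF_assoc]

lemma shF_unit_left (d : FPS m) : sh (unit m) d = d := funext (sh_unit_left d)

lemma shF_shInv (c : FPS m) (hc : c [] ≠ 0) : sh c (shInv c) = unit m := funext (sh_shInv c hc)

lemma shInv_shF (c : FPS m) (hc : c [] ≠ 0) : sh (shInv c) c = unit m := by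
  rw [shF_comm]; exact shF_shInv c hc

lemma shInv_sh (a b : FPS m) (ha : a [] ≠ 0) (hb : b [] ≠ 0) :
    shInv (sh a b) = sh (shInv a) (shInv b) := by
  have hab : sh a b [] ≠ 0 := by rw [sh_nil]; exact mul_ne_zero ha hb
  have key : ∀ w, sh (sh a b) (sh (shInv a) (shInv b)) w = unit m w := by
    have : sh (sh a b) (sh (shInv a) (shInv b)) = unit m := by
      rw [shF_assoc, shF_left_comm b, shF_shInv b hb, ← shF_assoc, shF_shInv a ha,
        shF_unit_left]
    intro w; rw [this]
  exact (funext (shInv_unique (sh a b) _ hab key)).symm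

lemma shInv_unit : shInv (unit m) = unit m := by
  refine (funext (shInv_unique (unit m) (unit m) (by simp [unit]) (fun w => sh_unit_left _ _))).symm

end
end CFS

namespace CFS
noncomputable section
variable {m ℓ : ℕ}

lemma sum_pi_succ {α : Type*} [Fintype α] (k : ℕ) (F : (Fin (k+1) → α) → ℝ) :
    ∑ η : Fin (k+1) → α, F η = ∑ x : α, ∑ η : Fin k → α, F (Fin.cons x η) := by
  calc ∑ η : Fin (k+1) → α, F η
      = ∑ p : α × (Fin k → α), F (Fin.cons p.1 p.2) :=
        (Fintype.sum_equiv (Fin.consEquiv fun _ => α) _ _ (fun p => rfl)).symm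
    _ = ∑ x : α, ∑ η : Fin k → α, F (Fin.cons x η) := Fintype.sum_prod_type _

lemma sum_option' {α : Type*} [Fintype α] (f : Option α → ℝ) :
    ∑ y : Option α, f y = f none + ∑ a : α, f (some a) := by
  rw [univ_option, Finset.sum_insertNone]

lemma sum_pi_zero {α : Type*} [Fintype α] (F : (Fin 0 → α) → ℝ) (r : ℝ)
    (h : ∀ g : Fin 0 → α, F g = r) : ∑ η : Fin 0 → α, F η = r := by
  rw [Finset.univ_unique, Finset.sum_singleton, h]

lemma lc_nil (x : Letter m) (c : FPS m) : lc x c [] = 0 := rfl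

lemma lc_cons (x y : Letter m) (c : FPS m) (u : Word m) :
    lc x c (y :: u) = if y = x then c u else 0 := rfl

lemma wmc_nil (d : FPST m m) : wmc d [] = unit m := rfl

lemma wmc_cons_none (d : FPST m m) (η : Word m) : wmc d (none :: η) = lc none (wmc d η) := rfl

lemma wmc_cons_some (d : FPST m m) (i : Fin m) (η : Word m) :
    wmc d (some i :: η) = lc (some i) (sh (d i) (wmc d η)) := rfl

lemma wmc_vanish (d : FPST m m) : ∀ (η : Word m) (w : Word m), w.length < η.length →
    wmc d η w = 0 := by
  intro η
  induction η with
  | nil => intro w hw; simp at hw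
  | cons y η ih =>
      intro w hw
      simp only [List.length_cons] at hw
      cases y with
      | none =>
          cases w with
          | nil => rfl
          | cons x w' =>
              rw [wmc_cons_none, lc_cons]
              split
              · exact ih w' (by simp at hw ⊢; omega)
              · rfl
      | some i =>
          cases w with
          | nil => rfl
          | cons x w' =>
              rw [wmc_cons_some, lc_cons]
              split
              · exact sh_vanish_right _ _ η.length (fun v hv => ih v hv) w' (by simp at hw ⊢; omega)
              · rfl

lemma wcomp_nil (d : FPST m ℓ) : wcomp d [] = unit m := rfl

lemma wcomp_cons_none (d : FPST m ℓ) (η : Word ℓ) :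
    wcomp d ((none : Letter ℓ) :: η) = lc none (sh (unit m) (wcomp d η)) := rfl

lemma wcomp_cons_some (d : FPST m ℓ) (i : Fin ℓ) (η : Word ℓ) :
    wcomp d ((some i : Letter ℓ) :: η) = lc none (sh (d i) (wcomp d η)) := rfl

lemma wcomp_vanish (d : FPST m ℓ) : ∀ (η : Word ℓ) (w : Word m), w.length < η.length →
    wcomp d η w = 0 := by
  intro η
  induction η with
  | nil => intro w hw; simp at hw
  | cons y η ih =>
      intro w hw
      simp only [List.length_cons] at hw
      cases y with
      | none =>
          cases w with
          | nil => rfl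
          | cons x w' =>
              rw [wcomp_cons_none, lc_cons]
              split
              · exact sh_vanish_right _ _ η.length (fun v hv => ih v hv) w' (by simp at hw ⊢; omega)
              · rfl
      | some i =>
          cases w with
          | nil => rfl
          | cons x w' =>
              rw [wcomp_cons_some, lc_cons]
              split
              · exact sh_vanish_right _ _ η.length (fun v hv => ih v hv) w' (by simp at hw ⊢; omega)
              · rfl

lemma wcomp_some_eval (d : FPST m ℓ) (η : Word ℓ) (j : Fin m) (w : Word m) :
    wcomp d η ((some j : Letter m) :: w) = 0 := by
  cases η with
  | nil => simp [wcomp_nil, unit]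
  | cons y η => cases y <;> simp [wcomp_cons_none, wcomp_cons_some, lc_cons]

lemma mc_extend (c : FPS m) (d : FPST m m) (w : Word m) (N : ℕ) (hN : w.length < N) :
    mc c d w = ∑ k ∈ Finset.range N, ∑ η : Fin k → Letter m,
      c (List.ofFn η) * wmc d (List.ofFn η) w := by
  show (∑ k ∈ Finset.range (w.length + 1), ∑ η : Fin k → Letter m,
      c (List.ofFn η) * wmc d (List.ofFn η) w) = _
  apply Finset.sum_subset (Finset.range_subset_range.2 (by omega))
  intro k hk hk'
  apply Finset.sum_eq_zero
  intro η _
  rw [wmc_vanish d _ w (by simp at hk' ⊢; omega), mul_zero]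

lemma comp_extend (c : FPS ℓ) (d : FPST m ℓ) (w : Word m) (N : ℕ) (hN : w.length < N) :
    comp c d w = ∑ k ∈ Finset.range N, ∑ η : Fin k → Letter ℓ,
      c (List.ofFn η) * wcomp d (List.ofFn η) w := by
  show (∑ k ∈ Finset.range (w.length + 1), ∑ η : Fin k → Letter ℓ,
      c (List.ofFn η) * wcomp d (List.ofFn η) w) = _
  apply Finset.sum_subset (Finset.range_subset_range.2 (by omega))
  intro k hk hk'
  apply Finset.sum_eq_zero
  intro η _
  rw [wcomp_vanish d _ w (by simp at hk' ⊢; omega), mul_zero]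

lemma mc_nil (c : FPS m) (d : FPST m m) : mc c d [] = c [] := by
  show (∑ k ∈ Finset.range 1, ∑ η : Fin k → Letter m,
      c (List.ofFn η) * wmc d (List.ofFn η) []) = _
  rw [Finset.sum_range_one]
  apply sum_pi_zero
  intro g
  simp [List.ofFn_zero, wmc_nil, unit]

lemma comp_nil (c : FPS ℓ) (d : FPST m ℓ) : comp c d [] = c [] := by
  show (∑ k ∈ Finset.range 1, ∑ η : Fin k → Letter ℓ,
      c (List.ofFn η) * wcomp d (List.ofFn η) []) = _
  rw [Finset.sum_range_one]
  apply sum_pi_zero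
  intro g
  simp [List.ofFn_zero, wcomp_nil, unit]

/-- generic first step for coefficients at a cons word -/
lemma mc_cons_aux (c : FPS m) (d : FPST m m) (x : Letter m) (w : Word m) :
    mc c d (x :: w) = ∑ k ∈ Finset.range (w.length + 1), ∑ y : Letter m,
      ∑ η : Fin k → Letter m,
        c (y :: List.ofFn η) * wmc d (y :: List.ofFn η) (x :: w) := by
  show (∑ k ∈ Finset.range (w.length + 1 + 1), ∑ η : Fin k → Letter m,
      c (List.ofFn η) * wmc d (List.ofFn η) (x :: w)) = _
  rw [Finset.sum_range_succ']
  have h0 : (∑ η : Fin 0 → Letter m, c (List.ofFn η) * wmc d (List.ofFn η) (x :: w)) = 0 := by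
    apply sum_pi_zero
    intro g
    simp [List.ofFn_zero, wmc_nil, unit]
  rw [h0, add_zero]
  apply Finset.sum_congr rfl
  intro k _
  rw [sum_pi_succ]
  apply Finset.sum_congr rfl
  intro y _
  apply Finset.sum_congr rfl
  intro η _
  rw [List.ofFn_succ]
  simp only [Fin.cons_zero, Fin.cons_succ]

lemma comp_cons_aux (c : FPS ℓ) (d : FPST m ℓ) (x : Letter m) (w : Word m) :
    comp c d (x :: w) = ∑ k ∈ Finset.range (w.length + 1), ∑ y : Letter ℓ,
      ∑ η : Fin k → Letter ℓ,
        c (y :: List.ofFn η) * wcomp d (y :: List.ofFn η) (x :: w) := by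
  show (∑ k ∈ Finset.range (w.length + 1 + 1), ∑ η : Fin k → Letter ℓ,
      c (List.ofFn η) * wcomp d (List.ofFn η) (x :: w)) = _
  rw [Finset.sum_range_succ']
  have h0 : (∑ η : Fin 0 → Letter ℓ, c (List.ofFn η) * wcomp d (List.ofFn η) (x :: w)) = 0 := by
    apply sum_pi_zero
    intro g
    simp [List.ofFn_zero, wcomp_nil, unit]
  rw [h0, add_zero]
  apply Finset.sum_congr rfl
  intro k _
  rw [sum_pi_succ]
  apply Finset.sum_congr rfl
  intro y _
  apply Finset.sum_congr rfl
  intro η _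
  rw [List.ofFn_succ]
  simp only [Fin.cons_zero, Fin.cons_succ]

end
end CFS

namespace CFS
noncomputable section
variable {m ℓ : ℕ}

lemma sh_fold {ℓ' : ℕ} (g : FPS m) (G : Word ℓ' → FPS m) (cf : Word ℓ' → ℝ) (w : Word m)
    (h : FPS m)
    (hh : ∀ u : Word m, u.length ≤ w.length →
      h u = ∑ k ∈ Finset.range (w.length + 1), ∑ η : Fin k → Letter ℓ',
        cf (List.ofFn η) * G (List.ofFn η) u) :
    (∑ k ∈ Finset.range (w.length + 1), ∑ η : Fin k → Letter ℓ',
      cf (List.ofFn η) * sh g (G (List.ofFn η)) w) = sh g h w := by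
  symm
  calc sh g h w
      = sh g (fun u => ∑ k ∈ Finset.range (w.length + 1), ∑ η : Fin k → Letter ℓ',
          cf (List.ofFn η) * G (List.ofFn η) u) w := sh_congr (fun _ _ => rfl) hh
    _ = ∑ k ∈ Finset.range (w.length + 1), sh g (fun u => ∑ η : Fin k → Letter ℓ',
          cf (List.ofFn η) * G (List.ofFn η) u) w := sh_sum_right g _ _ w
    _ = _ := by
        apply Finset.sum_congr rfl
        intro k _
        rw [sh_sum_right g Finset.univ (fun η => fun u => cf (List.ofFn η) * G (List.ofFn η) u) w]
        apply Finset.sum_congr rfl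
        intro η _
        exact sh_mul_right g _ _ w

lemma mc_cons_none (c : FPS m) (d : FPST m m) (w : Word m) :
    mc c d ((none : Letter m) :: w) = mc (fun u => c (none :: u)) d w := by
  rw [mc_cons_aux]
  conv_rhs => rw [show mc (fun u => c (none :: u)) d w
    = ∑ k ∈ Finset.range (w.length + 1), ∑ η : Fin k → Letter m,
        c (none :: List.ofFn η) * wmc d (List.ofFn η) w from rfl]
  apply Finset.sum_congr rfl
  intro k _
  rw [sum_option']
  have hsome : ∀ i : Fin m, (∑ η : Fin k → Letter m,
      c (some i :: List.ofFn η) * wmc d (some i :: List.ofFn η) ((none : Letter m) :: w)) = 0 := by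
    intro i
    apply Finset.sum_eq_zero
    intro η _
    rw [wmc_cons_some, lc_cons]
    simp
  rw [Finset.sum_eq_zero (fun i _ => hsome i), add_zero]
  apply Finset.sum_congr rfl
  intro η _
  rw [wmc_cons_none, lc_cons]
  simp

lemma mc_cons_some (c : FPS m) (d : FPST m m) (i : Fin m) (w : Word m) :
    mc c d (some i :: w) = sh (d i) (mc (fun u => c (some i :: u)) d) w := by
  rw [mc_cons_aux]
  have hy : ∀ k, k ∈ Finset.range (w.length + 1) → (∑ y : Letter m, ∑ η : Fin k → Letter m,
      c (y :: List.ofFn η) * wmc d (y :: List.ofFn η) (some i :: w))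
      = ∑ η : Fin k → Letter m, c (some i :: List.ofFn η) * sh (d i) (wmc d (List.ofFn η)) w := by
    intro k _
    rw [sum_option']
    have h0 : (∑ η : Fin k → Letter m,
        c (none :: List.ofFn η) * wmc d (none :: List.ofFn η) (some i :: w)) = 0 := by
      apply Finset.sum_eq_zero
      intro η _
      rw [wmc_cons_none, lc_cons]
      simp
    rw [h0, zero_add]
    rw [Fintype.sum_eq_single i (fun j hj => ?_)]
    · apply Finset.sum_congr rfl
      intro η _
      rw [wmc_cons_some, lc_cons]
      simp
    · apply Finset.sum_eq_zero
      intro η _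
      rw [wmc_cons_some, lc_cons]
      simp [(Option.some_injective _).ne_iff.2 (Ne.symm hj)]
  rw [Finset.sum_congr rfl hy]
  exact sh_fold (d i) (wmc d) (fun t => c (some i :: t)) w _
    (fun u hu => mc_extend _ d u _ (by omega))

lemma comp_cons_some (c : FPS ℓ) (d : FPST m ℓ) (j : Fin m) (w : Word m) :
    comp c d ((some j : Letter m) :: w) = 0 := by
  show (∑ k ∈ Finset.range (w.length + 1 + 1), ∑ η : Fin k → Letter ℓ,
      c (List.ofFn η) * wcomp d (List.ofFn η) ((some j : Letter m) :: w)) = 0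
  apply Finset.sum_eq_zero
  intro k _
  apply Finset.sum_eq_zero
  intro η _
  rw [wcomp_some_eval, mul_zero]

lemma comp_cons_none (c : FPS ℓ) (d : FPST m ℓ) (w : Word m) :
    comp c d ((none : Letter m) :: w)
      = comp (fun u => c ((none : Letter ℓ) :: u)) d w
        + ∑ i : Fin ℓ, sh (d i) (comp (fun u => c ((some i : Letter ℓ) :: u)) d) w := by
  rw [comp_cons_aux]
  have hy : ∀ k, k ∈ Finset.range (w.length + 1) → (∑ y : Letter ℓ, ∑ η : Fin k → Letter ℓ,
      c (y :: List.ofFn η) * wcomp d (y :: List.ofFn η) ((none : Letter m) :: w))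
      = (∑ η : Fin k → Letter ℓ, c ((none : Letter ℓ) :: List.ofFn η) * wcomp d (List.ofFn η) w)
        + ∑ i : Fin ℓ, ∑ η : Fin k → Letter ℓ,
            c ((some i : Letter ℓ) :: List.ofFn η) * sh (d i) (wcomp d (List.ofFn η)) w := by
    intro k _
    rw [sum_option']
    have ha : (∑ η : Fin k → Letter ℓ, c ((none : Letter ℓ) :: List.ofFn η)
          * wcomp d ((none : Letter ℓ) :: List.ofFn η) ((none : Letter m) :: w))
        = ∑ η : Fin k → Letter ℓ,
            c ((none : Letter ℓ) :: List.ofFn η) * wcomp d (List.ofFn η) w := by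
      apply Finset.sum_congr rfl
      intro η _
      rw [wcomp_cons_none, lc_cons]
      simp [sh_unit_left]
    have hb : ∀ i : Fin ℓ, (∑ η : Fin k → Letter ℓ, c ((some i : Letter ℓ) :: List.ofFn η)
          * wcomp d ((some i : Letter ℓ) :: List.ofFn η) ((none : Letter m) :: w))
        = ∑ η : Fin k → Letter ℓ,
            c ((some i : Letter ℓ) :: List.ofFn η) * sh (d i) (wcomp d (List.ofFn η)) w := by
      intro i
      apply Finset.sum_congr rfl
      intro η _
      rw [wcomp_cons_some, lc_cons]
      simp
    rw [ha, Finset.sum_congr rfl (fun i (_ : i ∈ Finset.univ) => hb i)]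
  rw [Finset.sum_congr rfl hy, Finset.sum_add_distrib]
  have h2 : (∑ k ∈ Finset.range (w.length + 1), ∑ i : Fin ℓ, ∑ η : Fin k → Letter ℓ,
      c ((some i : Letter ℓ) :: List.ofFn η) * sh (d i) (wcomp d (List.ofFn η)) w)
      = ∑ i : Fin ℓ, sh (d i) (comp (fun u => c ((some i : Letter ℓ) :: u)) d) w := by
    rw [Finset.sum_comm]
    apply Finset.sum_congr rfl
    intro i _
    exact sh_fold (d i) (wcomp d) (fun t => c ((some i : Letter ℓ) :: t)) w _
      (fun u hu => comp_extend _ d u _ (by omega))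
  rw [h2]
  rfl

lemma mc_add (c c' : FPS m) (d : FPST m m) (w : Word m) :
    mc (fun u => c u + c' u) d w = mc c d w + mc c' d w := by
  simp [mc, add_mul, Finset.sum_add_distrib]

lemma mc_zero (d : FPST m m) (w : Word m) : mc (fun _ => (0:ℝ)) d w = 0 := by
  simp [mc]

lemma comp_add (c c' : FPS ℓ) (d : FPST m ℓ) (w : Word m) :
    comp (fun u => c u + c' u) d w = comp c d w + comp c' d w := by
  simp [comp, add_mul, Finset.sum_add_distrib]

lemma comp_zero (d : FPST m ℓ) (w : Word m) : comp (fun _ => (0:ℝ)) d w = 0 := by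
  simp [comp]

lemma mc_sum {ι : Type*} (s : Finset ι) (f : ι → FPS m) (d : FPST m m) (w : Word m) :
    mc (fun u => ∑ i ∈ s, f i u) d w = ∑ i ∈ s, mc (f i) d w := by
  classical
  induction s using Finset.induction with
  | empty => simpa using mc_zero d w
  | insert a s h ih =>
      have h1 : (fun u => ∑ i ∈ insert a s, f i u) = fun u => f a u + ∑ i ∈ s, f i u := by
        funext u; rw [Finset.sum_insert h]
      rw [h1, mc_add, ih, Finset.sum_insert h]

lemma mc_unit_left (d : FPST m m) (w : Word m) : mc (unit m) d w = unit m w := by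
  cases w with
  | nil => rw [mc_nil]
  | cons x w =>
      cases x with
      | none =>
          rw [mc_cons_none,
            show (fun u : Word m => unit m (none :: u)) = (fun _ => (0:ℝ)) from
              funext fun u => by simp [unit],
            mc_zero]
          simp [unit]
      | some i =>
          rw [mc_cons_some,
            show (fun u : Word m => unit m (some i :: u)) = (fun _ => (0:ℝ)) from
              funext fun u => by simp [unit],
            show mc (fun _ => (0:ℝ)) d = (fun _ => (0:ℝ)) from funext (mc_zero d),
            sh_zero_right]
          simp [unit]

lemma comp_unit_left (d : FPST m ℓ) (w : Word m) : comp (unit ℓ) d w = unit m w := by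
  show (∑ k ∈ Finset.range (w.length + 1), ∑ η : Fin k → Letter ℓ,
      unit ℓ (List.ofFn η) * wcomp d (List.ofFn η) w) = unit m w
  rw [Finset.sum_eq_single 0]
  · apply sum_pi_zero
    intro g
    simp [List.ofFn_zero, wcomp_nil, unit]
  · intro k _ hk
    apply Finset.sum_eq_zero
    intro η _
    have : unit ℓ (List.ofFn η) = 0 := by
      simp [unit, List.ofFn_eq_nil_iff, hk]
    rw [this, zero_mul]
  · intro h
    exact absurd (Finset.mem_range.2 (by omega)) h

lemma mc_unitT_right (c : FPS m) (w : Word m) : mc c (unitT m m) w = c w := by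
  induction w generalizing c with
  | nil => exact mc_nil c _
  | cons x w ih =>
      cases x with
      | none => rw [mc_cons_none]; exact ih _
      | some i =>
          rw [mc_cons_some]
          show sh (unit m) _ w = _
          rw [sh_unit_left]
          exact ih _

end
end CFS

namespace CFS
noncomputable section
variable {m ℓ : ℕ}

lemma sh_sum_left {ι : Type*} (s : Finset ι) (f : ι → FPS m) (g : FPS m) (w : Word m) :
    sh (fun u => ∑ i ∈ s, f i u) g w = ∑ i ∈ s, sh (f i) g w := by
  rw [sh_comm, sh_sum_right]
  exact Finset.sum_congr rfl (fun i _ => sh_comm g (f i) w)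

lemma mc_sh (d : FPST m m) : ∀ (w : Word m) (a b : FPS m),
    mc (sh a b) d w = sh (mc a d) (mc b d) w := by
  suffices H : ∀ n : ℕ, ∀ w : Word m, w.length < n → ∀ a b : FPS m,
      mc (sh a b) d w = sh (mc a d) (mc b d) w from fun w => H (w.length + 1) w (by omega)
  intro n
  induction n with
  | zero => intro w hw; exact absurd hw (Nat.not_lt_zero _)
  | succ n ih =>
      intro w hw a b
      cases w with
      | nil => rw [mc_nil, sh_nil, sh_nil, mc_nil, mc_nil]
      | cons x w =>
          simp only [List.length_cons] at hw
          cases x with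
          | none =>
              rw [mc_cons_none, sh_cons]
              have h1 : mc (fun u => sh a b ((none : Letter m) :: u)) d w
                  = mc (fun u => sh (fun v => a (none :: v)) b u
                      + sh a (fun v => b (none :: v)) u) d w := rfl
              rw [h1, mc_add, ih w (by omega) _ _, ih w (by omega) _ _,
                show (fun u => mc a d ((none : Letter m) :: u))
                    = mc (fun v => a (none :: v)) d from funext fun u => mc_cons_none a d u,
                show (fun u => mc b d ((none : Letter m) :: u))
                    = mc (fun v => b (none :: v)) d from funext fun u => mc_cons_none b d u]
          | some i =>
              rw [mc_cons_some, sh_cons,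
                show (fun u => mc a d (some i :: u))
                    = sh (d i) (mc (fun v => a (some i :: v)) d) from
                  funext fun u => mc_cons_some a d i u,
                show (fun u => mc b d (some i :: u))
                    = sh (d i) (mc (fun v => b (some i :: v)) d) from
                  funext fun u => mc_cons_some b d i u]
              have h0 : mc (fun u => sh a b (some i :: u)) d
                  = mc (fun u => sh (fun v => a (some i :: v)) b u
                      + sh a (fun v => b (some i :: v)) u) d := rfl
              have h1 : mc (fun u => sh (fun v => a (some i :: v)) b u
                      + sh a (fun v => b (some i :: v)) u) d
                  = fun u => mc (sh (fun v => a (some i :: v)) b) d u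
                      + mc (sh a (fun v => b (some i :: v))) d u :=
                funext fun u => mc_add _ _ d u
              rw [h0, h1, sh_add_right]
              have h2 : sh (d i) (mc (sh (fun v => a (some i :: v)) b) d) w
                  = sh (d i) (sh (mc (fun v => a (some i :: v)) d) (mc b d)) w :=
                sh_congr (fun _ _ => rfl) (fun u hu => ih u (by omega) _ _)
              have h3 : sh (d i) (mc (sh a (fun v => b (some i :: v))) d) w
                  = sh (d i) (sh (mc a d) (mc (fun v => b (some i :: v)) d)) w :=
                sh_congr (fun _ _ => rfl) (fun u hu => ih u (by omega) _ _)
              rw [h2, h3, ← shF_assoc, shF_left_comm (d i) (mc a d)]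

lemma mcF_sh (d : FPST m m) (a b : FPS m) :
    mc (sh a b) d = sh (mc a d) (mc b d) := funext fun w => mc_sh d w a b

lemma mc_mc (b e : FPST m m) : ∀ (w : Word m) (a : FPS m),
    mc (mc a b) e w = mc a (star b e) w := by
  suffices H : ∀ n : ℕ, ∀ w : Word m, w.length < n → ∀ a : FPS m,
      mc (mc a b) e w = mc a (star b e) w from fun w => H (w.length + 1) w (by omega)
  intro n
  induction n with
  | zero => intro w hw; exact absurd hw (Nat.not_lt_zero _)
  | succ n ih =>
      intro w hw a
      cases w with
      | nil => rw [mc_nil, mc_nil, mc_nil]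
      | cons x w =>
          simp only [List.length_cons] at hw
          cases x with
          | none =>
              rw [mc_cons_none, mc_cons_none,
                show (fun u => mc a b ((none : Letter m) :: u))
                    = mc (fun v => a (none :: v)) b from funext fun u => mc_cons_none a b u]
              exact ih w (by omega) _
          | some i =>
              rw [mc_cons_some, mc_cons_some,
                show (fun u => mc a b (some i :: u))
                    = sh (b i) (mc (fun v => a (some i :: v)) b) from
                  funext fun u => mc_cons_some a b i u,
                mcF_sh, ← shF_assoc]
              have h2 : sh (sh (e i) (mc (b i) e)) (mc (mc (fun v => a (some i :: v)) b) e) w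
                  = sh (sh (e i) (mc (b i) e)) (mc (fun v => a (some i :: v)) (star b e)) w :=
                sh_congr (fun _ _ => rfl) (fun u hu => ih u (by omega) _)
              rw [h2]
              rfl

lemma comp_sh (d : FPST m ℓ) : ∀ (w : Word m) (a b : FPS ℓ),
    comp (sh a b) d w = sh (comp a d) (comp b d) w := by
  suffices H : ∀ n : ℕ, ∀ w : Word m, w.length < n → ∀ a b : FPS ℓ,
      comp (sh a b) d w = sh (comp a d) (comp b d) w from fun w => H (w.length + 1) w (by omega)
  intro n
  induction n with
  | zero => intro w hw; exact absurd hw (Nat.not_lt_zero _)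
  | succ n ih =>
      intro w hw a b
      cases w with
      | nil => rw [comp_nil, sh_nil, sh_nil, comp_nil, comp_nil]
      | cons x w =>
          simp only [List.length_cons] at hw
          cases x with
          | some j =>
              rw [comp_cons_some, sh_cons,
                show (fun u => comp a d ((some j : Letter m) :: u)) = (fun _ => (0:ℝ)) from
                  funext fun u => comp_cons_some a d j u,
                show (fun u => comp b d ((some j : Letter m) :: u)) = (fun _ => (0:ℝ)) from
                  funext fun u => comp_cons_some b d j u,
                sh_zero_left, sh_zero_right]
              norm_num
          | none =>
              rw [comp_cons_none]
              have hn : comp (fun u => sh a b ((none : Letter ℓ) :: u)) d w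
                  = sh (comp (fun v => a ((none : Letter ℓ) :: v)) d) (comp b d) w
                    + sh (comp a d) (comp (fun v => b ((none : Letter ℓ) :: v)) d) w := by
                have h0 : comp (fun u => sh a b ((none : Letter ℓ) :: u)) d w
                    = comp (fun u => sh (fun v => a ((none : Letter ℓ) :: v)) b u
                        + sh a (fun v => b ((none : Letter ℓ) :: v)) u) d w := rfl
                rw [h0, comp_add, ih w (by omega) _ _, ih w (by omega) _ _]
              have hi : ∀ i : Fin ℓ,
                  sh (d i) (comp (fun u => sh a b ((some i : Letter ℓ) :: u)) d) w
                  = sh (sh (d i) (comp (fun v => a ((some i : Letter ℓ) :: v)) d)) (comp b d) w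
                    + sh (comp a d) (sh (d i) (comp (fun v => b ((some i : Letter ℓ) :: v)) d)) w := by
                intro i
                have h0 : comp (fun u => sh a b ((some i : Letter ℓ) :: u)) d
                    = fun u => comp (sh (fun v => a ((some i : Letter ℓ) :: v)) b) d u
                        + comp (sh a (fun v => b ((some i : Letter ℓ) :: v))) d u :=
                  funext fun u => comp_add _ _ d u
                rw [h0, sh_add_right]
                have h2 : sh (d i) (comp (sh (fun v => a ((some i : Letter ℓ) :: v)) b) d) w
                    = sh (d i) (sh (comp (fun v => a ((some i : Letter ℓ) :: v)) d) (comp b d)) w :=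
                  sh_congr (fun _ _ => rfl) (fun u hu => ih u (by omega) _ _)
                have h3 : sh (d i) (comp (sh a (fun v => b ((some i : Letter ℓ) :: v))) d) w
                    = sh (d i) (sh (comp a d) (comp (fun v => b ((some i : Letter ℓ) :: v)) d)) w :=
                  sh_congr (fun _ _ => rfl) (fun u hu => ih u (by omega) _ _)
                rw [h2, h3, ← shF_assoc, shF_left_comm (d i) (comp a d)]
              rw [hn, Finset.sum_congr rfl (fun i (_ : i ∈ Finset.univ) => hi i),
                Finset.sum_add_distrib, sh_cons,
                show (fun u => comp a d ((none : Letter m) :: u))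
                    = fun u => comp (fun v => a ((none : Letter ℓ) :: v)) d u
                        + ∑ i : Fin ℓ, sh (d i) (comp (fun v => a ((some i : Letter ℓ) :: v)) d) u from
                  funext fun u => comp_cons_none a d u,
                show (fun u => comp b d ((none : Letter m) :: u))
                    = fun u => comp (fun v => b ((none : Letter ℓ) :: v)) d u
                        + ∑ i : Fin ℓ, sh (d i) (comp (fun v => b ((some i : Letter ℓ) :: v)) d) u from
                  funext fun u => comp_cons_none b d u,
                sh_add_left, sh_add_right, sh_sum_left, sh_sum_right]
              ring

lemma comp_mc (cT : FPST m ℓ) (e : FPST m m) : ∀ (w : Word m) (f : FPS ℓ),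
    comp f (mcT cT e) w = mc (comp f cT) e w := by
  suffices H : ∀ n : ℕ, ∀ w : Word m, w.length < n → ∀ f : FPS ℓ,
      comp f (mcT cT e) w = mc (comp f cT) e w from fun w => H (w.length + 1) w (by omega)
  intro n
  induction n with
  | zero => intro w hw; exact absurd hw (Nat.not_lt_zero _)
  | succ n ih =>
      intro w hw f
      cases w with
      | nil => rw [comp_nil, mc_nil, comp_nil]
      | cons x w =>
          simp only [List.length_cons] at hw
          cases x with
          | some j =>
              rw [comp_cons_some, mc_cons_some,
                show (fun u => comp f cT ((some j : Letter m) :: u)) = (fun _ => (0:ℝ)) from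
                  funext fun u => comp_cons_some f cT j u,
                show mc (fun _ => (0:ℝ)) e = (fun _ => (0:ℝ)) from funext (mc_zero e),
                sh_zero_right]
          | none =>
              rw [comp_cons_none, ih w (by omega) _]
              have hi : ∀ i : Fin ℓ,
                  sh (mcT cT e i) (comp (fun u => f ((some i : Letter ℓ) :: u)) (mcT cT e)) w
                  = mc (sh (cT i) (comp (fun u => f ((some i : Letter ℓ) :: u)) cT)) e w := by
                intro i
                have h2 : sh (mcT cT e i) (comp (fun u => f ((some i : Letter ℓ) :: u)) (mcT cT e)) w
                    = sh (mc (cT i) e) (mc (comp (fun u => f ((some i : Letter ℓ) :: u)) cT) e) w :=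
                  sh_congr (fun _ _ => rfl) (fun u hu => ih u (by omega) _)
                rw [h2, ← mc_sh]
              rw [Finset.sum_congr rfl (fun i (_ : i ∈ Finset.univ) => hi i),
                mc_cons_none (comp f cT) e w,
                show (fun u => comp f cT ((none : Letter m) :: u))
                    = fun u => comp (fun v => f ((none : Letter ℓ) :: v)) cT u
                        + ∑ i : Fin ℓ, sh (cT i) (comp (fun v => f ((some i : Letter ℓ) :: v)) cT) u from
                  funext fun u => comp_cons_none f cT u,
                mc_add, mc_sum]

end
end CFS

namespace CFS
noncomputable section
variable {m ℓ : ℕ}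

lemma wmc_congr (e e' : FPST m m) (n : ℕ)
    (he : ∀ (i : Fin m) (v : Word m), v.length < n → e i v = e' i v) :
    ∀ (η : Word m) (w : Word m), w.length ≤ n → wmc e η w = wmc e' η w := by
  intro η
  induction η with
  | nil => intro w _; rfl
  | cons y η ih =>
      intro w hw
      cases y with
      | none =>
          cases w with
          | nil => rfl
          | cons x w' =>
              rw [wmc_cons_none, wmc_cons_none, lc_cons, lc_cons]
              split
              · exact ih w' (by simp at hw ⊢; omega)
              · rfl
      | some i =>
          cases w with
          | nil => rfl
          | cons x w' =>
              rw [wmc_cons_some, wmc_cons_some, lc_cons, lc_cons]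
              split
              · simp only [List.length_cons] at hw
                exact sh_congr (fun u hu => he i u (by omega))
                  (fun u hu => ih u (by omega))
              · rfl

lemma mc_congr_inner (c : FPS m) (e e' : FPST m m) (n : ℕ)
    (he : ∀ (i : Fin m) (v : Word m), v.length < n → e i v = e' i v)
    (w : Word m) (hw : w.length ≤ n) : mc c e w = mc c e' w := by
  show (∑ k ∈ Finset.range (w.length + 1), ∑ η : Fin k → Letter m,
      c (List.ofFn η) * wmc e (List.ofFn η) w) = _
  apply Finset.sum_congr rfl
  intro k _
  apply Finset.sum_congr rfl
  intro η _
  rw [wmc_congr e e' n he _ w hw]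

lemma starInvAux_succ (d : FPST m m) (n : ℕ) :
    starInvAux d (n+1) = mcT (shInvT d) (starInvAux d n) := rfl

lemma starInvAux_stable (d : FPST m m) : ∀ n k l : ℕ, n ≤ k → n ≤ l →
    ∀ (i : Fin m) (w : Word m), w.length < n → starInvAux d k i w = starInvAux d l i w := by
  intro n
  induction n with
  | zero => intro k l _ _ i w hw; exact absurd hw (Nat.not_lt_zero _)
  | succ n ih =>
      intro k l hk hl i w hw
      obtain ⟨k, rfl⟩ : ∃ k', k = k' + 1 := ⟨k - 1, by omega⟩
      obtain ⟨l, rfl⟩ : ∃ l', l = l' + 1 := ⟨l - 1, by omega⟩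
      show mc (shInv (d i)) (starInvAux d k) w = mc (shInv (d i)) (starInvAux d l) w
      exact mc_congr_inner _ _ _ w.length
        (fun j v hv => ih k l (by omega) (by omega) j v (by omega)) w le_rfl

lemma starInv_fix (d : FPST m m) (i : Fin m) (w : Word m) :
    starInv d i w = mc (shInv (d i)) (starInv d) w := by
  have h1 : starInv d i w = starInvAux d (w.length + 2) i w :=
    starInvAux_stable d (w.length + 1) _ _ le_rfl (by omega) i w (by omega)
  rw [h1]
  show mc (shInv (d i)) (starInvAux d (w.length + 1)) w = _
  exact mc_congr_inner _ _ _ w.length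
    (fun j v hv => starInvAux_stable d (v.length + 1) _ _ (by omega) le_rfl j v (by omega))
    w le_rfl

lemma fix_unique (d e e' : FPST m m)
    (he : ∀ (i : Fin m) (w : Word m), e i w = mc (shInv (d i)) e w)
    (he' : ∀ (i : Fin m) (w : Word m), e' i w = mc (shInv (d i)) e' w) :
    e = e' := by
  suffices H : ∀ n : ℕ, ∀ (i : Fin m) (w : Word m), w.length < n → e i w = e' i w by
    funext i w; exact H (w.length + 1) i w (by omega)
  intro n
  induction n with
  | zero => intro i w hw; exact absurd hw (Nat.not_lt_zero _)
  | succ n ih =>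
      intro i w hw
      rw [he i w, he' i w]
      exact mc_congr_inner _ _ _ n (fun j v hv => ih j v hv) w (by omega)

lemma mc_shInv (a : FPS m) (e : FPST m m) (ha : a [] ≠ 0) :
    ∀ w, mc (shInv a) e w = shInv (mc a e) w := by
  apply shInv_unique (mc a e) (mc (shInv a) e) (by rw [mc_nil]; exact ha)
  intro w
  rw [← mc_sh, shF_shInv a ha]
  exact mc_unit_left e w

lemma comp_shInv (a : FPS ℓ) (cT : FPST m ℓ) (ha : a [] ≠ 0) :
    ∀ w, comp (shInv a) cT w = shInv (comp a cT) w := by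
  apply shInv_unique (comp a cT) (comp (shInv a) cT) (by rw [comp_nil]; exact ha)
  intro w
  rw [← comp_sh, shF_shInv a ha]
  exact comp_unit_left cT w

lemma fix_star (A e : FPST m m) (hA : ∀ i, A i [] ≠ 0)
    (hfix : ∀ (i : Fin m) (w : Word m), e i w = mc (shInv (A i)) e w) :
    star A e = unitT m m := by
  funext i
  have h1 : e i = shInv (mc (A i) e) := by
    funext w
    rw [hfix i w, mc_shInv (A i) e (hA i) w]
  show sh (e i) (mc (A i) e) = unit m
  rw [h1, shF_comm]
  exact shF_shInv (mc (A i) e) (by rw [mc_nil]; exact hA i)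

lemma star_fix (A e : FPST m m) (hA : ∀ i, A i [] ≠ 0) (hstar : star A e = unitT m m) :
    ∀ (i : Fin m) (w : Word m), e i w = mc (shInv (A i)) e w := by
  intro i w
  have h1 : ∀ w, sh (mc (A i) e) (e i) w = unit m w := by
    intro w
    rw [sh_comm]
    exact congrFun (congrFun hstar i) w
  have h2 := shInv_unique (mc (A i) e) (e i) (by rw [mc_nil]; exact hA i) h1
  rw [h2 w, ← mc_shInv (A i) e (hA i) w]

lemma star_assoc (a b e : FPST m m) : star (star a b) e = star a (star b e) := by
  funext i
  show sh (e i) (mc (sh (b i) (mc (a i) b)) e) = sh (star b e i) (mc (a i) (star b e))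
  rw [mcF_sh, ← shF_assoc]
  have h1 : mc (mc (a i) b) e = mc (a i) (star b e) := funext fun w => mc_mc b e w (a i)
  rw [h1]
  rfl

lemma starInv_unitT : starInv (unitT m m) = unitT m m := by
  apply fix_unique (unitT m m) _ _ (starInv_fix _)
  intro i w
  show unit m w = mc (shInv (unit m)) (unitT m m) w
  rw [shInv_unit, mc_unit_left]

end
end CFS

open CFS in
/-- The multiplicative dynamic feedback product
`c @̌ d := c ⟲ (d^{⧢-1} ∘ c)^{⋆-1}` is a right group action of the shuffle group of
purely improper tuples `(ℝ^m⟨⟨X'⟩⟩_{pi}, ⧢, 1l)` on `ℝ^q⟨⟨X⟩⟩`: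
`c @̌ 1l = c` and `(c @̌ d₁) @̌ d₂ = c @̌ (d₁ ⧢ d₂)`
(with `⧢` preserving pure improperness). -/
theorem feedback_group_action (m q : ℕ) (c : FPST m q) :
    fb c (unitT q m) = c ∧
    ∀ d₁ d₂ : FPST q m, PurelyImproper d₁ → PurelyImproper d₂ →
      PurelyImproper (shT d₁ d₂) ∧ fb (fb c d₁) d₂ = fb c (shT d₁ d₂) := by
  constructor
  · -- identity acts trivially
    show mcT c (starInv (compT (shInvT (unitT q m)) c)) = c
    have h1 : shInvT (unitT q m) = unitT q m := by
      funext i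
      show shInv (unit q) = unit q
      exact shInv_unit
    have h2 : compT (unitT q m) c = unitT m m := by
      funext i w
      exact comp_unit_left c w
    rw [h1, h2, starInv_unitT]
    funext i w
    exact mc_unitT_right (c i) w
  · intro d₁ d₂ h1 h2
    have hsh : PurelyImproper (shT d₁ d₂) := by
      intro i
      show sh (d₁ i) (d₂ i) [] ≠ 0
      rw [sh_nil]
      exact mul_ne_zero (h1 i) (h2 i)
    refine ⟨hsh, ?_⟩
    have hA : ∀ (d : FPST q m), PurelyImproper d →
        ∀ i, compT (shInvT d) c i [] ≠ 0 := by
      intro d hd i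
      show comp (shInv (d i)) c [] ≠ 0
      rw [comp_nil, shInv_nil]
      exact inv_ne_zero (hd i)
    set A₁ := compT (shInvT d₁) c with hA₁def
    set A₂ := compT (shInvT d₂) c with hA₂def
    set e₁ := starInv A₁ with he₁def
    have hA₁ : ∀ i, A₁ i [] ≠ 0 := hA d₁ h1
    have hA₂ : ∀ i, A₂ i [] ≠ 0 := hA d₂ h2
    set B := mcT A₂ e₁ with hBdef
    have hB : compT (shInvT d₂) (fb c d₁) = B := by
      funext i w
      show comp (shInv (d₂ i)) (mcT c e₁) w = mc (comp (shInv (d₂ i)) c) e₁ w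
      exact comp_mc c e₁ w (shInv (d₂ i))
    have hBpi : ∀ i, B i [] ≠ 0 := by
      intro i
      show mc (A₂ i) e₁ [] ≠ 0
      rw [mc_nil]
      exact hA₂ i
    set X := (fun i => sh (A₁ i) (A₂ i)) with hXdef
    have hX : compT (shInvT (shT d₁ d₂)) c = X := by
      funext i w
      show comp (shInv (sh (d₁ i) (d₂ i))) c w = sh (A₁ i) (A₂ i) w
      rw [shInv_sh (d₁ i) (d₂ i) (h1 i) (h2 i)]
      exact comp_sh c w (shInv (d₁ i)) (shInv (d₂ i))
    have hXpi : ∀ i, X i [] ≠ 0 := by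
      intro i
      show sh (A₁ i) (A₂ i) [] ≠ 0
      rw [sh_nil]
      exact mul_ne_zero (hA₁ i) (hA₂ i)
    have hs1 : star A₁ e₁ = unitT m m := fix_star A₁ e₁ hA₁ (starInv_fix A₁)
    have hXe : star X e₁ = B := by
      funext i
      show sh (e₁ i) (mc (sh (A₁ i) (A₂ i)) e₁) = mc (A₂ i) e₁
      rw [mcF_sh, ← shF_assoc]
      have hu : sh (e₁ i) (mc (A₁ i) e₁) = unit m := congrFun hs1 i
      rw [hu, shF_unit_left]
    have hs2 : star B (starInv B) = unitT m m := fix_star B _ hBpi (starInv_fix B)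
    have hs3 : star X (star e₁ (starInv B)) = unitT m m := by
      rw [← star_assoc, hXe, hs2]
    have hkey : star e₁ (starInv B) = starInv X :=
      fix_unique X _ _ (star_fix X _ hXpi hs3) (starInv_fix X)
    show mcT (fb c d₁) (starInv (compT (shInvT d₂) (fb c d₁)))
        = mcT c (starInv (compT (shInvT (shT d₁ d₂)) c))
    rw [hB, hX, ← hkey]
    funext i w
    show mc (mc (c i) e₁) (starInv B) w = mc (c i) (star e₁ (starInv B)) w
    exact mc_mc e₁ (starInv B) w (c i)
end

section
/- Let X = {x_0, x_1}, let c ∈ ℝ⟨⟨X⟩⟩ have class r (𝒞(c) = r), and let d ∈ ℝ⟨⟨X⟩⟩ with d(𝟙) ≠ 0. Then the multiplicative dynamic feedback product c @̌ d := c ⟲ (d^{⧢-1} ∘ c)^{⋆-1} has class r: 𝒞(c @̌ d) = r = 𝒞(c). -/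
open scoped BigOperators

namespace CFSAux

open CFS

/-- If `f` vanishes on words of length `< k`, then `sh g f` vanishes on words of length `< k`. -/
lemma sh_zero_of_supp : ∀ (w : Word 1) (k : ℕ) (g f : FPS 1),
    (∀ v : Word 1, v.length < k → f v = 0) → w.length < k → sh g f w = 0 := by
  intro w
  induction w with
  | nil => intro k g f hf hw; simp [sh, hf [] hw]
  | cons x w ih =>
    intro k g f hf hw
    simp only [sh]
    rw [ih k _ f hf (by simp at hw ⊢; omega),
      ih (k - 1) g (fun u => f (x :: u)) (fun v hv => hf (x :: v) (by simp; omega))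
        (by simp at hw ⊢; omega)]
    ring

/-- If `f` vanishes on words shorter than `w`, then `sh g f w = g [] * f w`. -/
lemma sh_head : ∀ (w : Word 1) (g f : FPS 1),
    (∀ v : Word 1, v.length < w.length → f v = 0) → sh g f w = g [] * f w := by
  intro w
  induction w with
  | nil => intro g f _; simp [sh]
  | cons x w ih =>
    intro g f hf
    simp only [sh]
    rw [sh_zero_of_supp w (x :: w).length _ f hf (by simp),
      ih g (fun u => f (x :: u)) (fun v hv => hf (x :: v) (by simpa using hv))]
    ring

lemma wmc_supp (E : FPST 1 1) : ∀ (η : Word 1) (w : Word 1),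
    w.length < η.length → wmc E η w = 0 := by
  intro η
  induction η with
  | nil => intro w hw; simp at hw
  | cons x η ih =>
    intro w hw
    match x, w with
    | none, [] => simp [wmc, lc]
    | some i, [] => simp [wmc, lc]
    | none, y :: w =>
      simp only [wmc, lc]
      split
      · exact ih w (by simp at hw ⊢; omega)
      · rfl
    | some i, y :: w =>
      simp only [wmc, lc]
      split
      · exact sh_zero_of_supp w η.length _ _ (fun v hv => ih v hv) (by simp at hw ⊢; omega)
      · rfl

lemma wmc_pure (E : FPST 1 1) : ∀ (k : ℕ) (w : Word 1),
    wmc E (List.replicate k none) w = if w = List.replicate k none then 1 else 0 := by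
  intro k
  induction k with
  | zero => intro w; simp [wmc, unit]
  | succ k ih =>
    intro w
    rw [List.replicate_succ]
    match w with
    | [] => simp [wmc, lc]
    | y :: w =>
      simp only [wmc, lc]
      split
      · rename_i h; subst h
        rw [ih w]
        by_cases hw : w = List.replicate k none <;> simp [hw]
      · rename_i h
        simp [List.cons_eq_cons, h]

lemma wmc_prefix (E : FPST 1 1) (i : Fin 1) (u : Word 1) : ∀ (a : ℕ) (w : Word 1),
    wmc E (List.replicate a none ++ some i :: u) w ≠ 0 →
    ∃ v, w = List.replicate a none ++ some i :: v := by
  intro a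
  induction a with
  | zero =>
    intro w hw
    match w with
    | [] => simp [wmc, lc] at hw
    | y :: w =>
      simp only [List.replicate_zero, List.nil_append, wmc, lc] at hw ⊢
      split at hw
      · rename_i h; exact ⟨w, by rw [h]⟩
      · exact absurd rfl hw
  | succ a ih =>
    intro w hw
    rw [List.replicate_succ, List.cons_append] at hw
    match w with
    | [] => simp [wmc, lc] at hw
    | y :: w =>
      simp only [wmc, lc] at hw
      split at hw
      · rename_i h
        obtain ⟨v, hv⟩ := ih w hw
        exact ⟨v, by rw [h, hv, List.replicate_succ, List.cons_append]⟩
      · exact absurd rfl hw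

lemma wmc_diag_ne (E : FPST 1 1) : ∀ (η w : Word 1),
    w.length = η.length → w ≠ η → wmc E η w = 0 := by
  intro η
  induction η with
  | nil => intro w hl hne; simp at hl; exact absurd hl hne
  | cons x η ih =>
    intro w hl hne
    match w with
    | [] => simp at hl
    | y :: w =>
      simp only [List.length_cons, Nat.succ_inj] at hl
      match x with
      | none =>
        simp only [wmc, lc]
        split
        · rename_i h; subst h
          exact ih w hl (fun h => hne (by rw [h]))
        · rfl
      | some i =>
        simp only [wmc, lc]
        split
        · rename_i h; subst h
          rw [sh_head w _ _ (fun v hv => wmc_supp E η v (by omega))]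
          rw [ih w hl (fun h => hne (by rw [h]))]
          ring
        · rfl

lemma wmc_self_ne (E : FPST 1 1) (hE : E 0 [] ≠ 0) : ∀ (η : Word 1), wmc E η η ≠ 0 := by
  intro η
  induction η with
  | nil => simp [wmc, unit]
  | cons x η ih =>
    match x with
    | none => simpa [wmc, lc] using ih
    | some i =>
      simp only [wmc, lc, if_pos rfl]
      rw [sh_head η _ _ (fun v hv => wmc_supp E η v hv)]
      have : i = 0 := Subsingleton.elim _ _
      subst this
      exact mul_ne_zero hE ih

lemma decomp : ∀ (η : Word 1), ¬ (∀ x ∈ η, x = (none : Letter 1)) →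
    ∃ a u, η = List.replicate a (none : Letter 1) ++ some (0 : Fin 1) :: u := by
  intro η
  induction η with
  | nil => intro h; exact absurd (by simp) h
  | cons x η ih =>
    intro h
    match x with
    | none =>
      have h' : ¬ (∀ x ∈ η, x = (none : Letter 1)) := by
        intro hη; exact h (by simpa using hη)
      obtain ⟨a, u, hu⟩ := ih h'
      exact ⟨a + 1, u, by rw [hu, List.replicate_succ, List.cons_append]⟩
    | some i =>
      have : i = 0 := Subsingleton.elim _ _
      subst this
      exact ⟨0, η, by simp⟩

lemma rep_append_ne {a b : ℕ} (hab : a < b) (i : Fin 1) (u v : Word 1) :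
    List.replicate a (none : Letter 1) ++ some i :: u ≠ List.replicate b none ++ v := by
  intro h
  have h1 : (List.replicate a (none : Letter 1) ++ some i :: u)[a]? = some (some i) := by
    rw [List.getElem?_append_right (by simp)]
    simp
  rw [h, List.getElem?_append, List.getElem?_replicate] at h1
  simp [hab] at h1

lemma mc_single (c : FPS 1) (E : FPST 1 1) (w : Word 1)
    (h : ∀ η : Word 1, η.length ≤ w.length → η ≠ w → c η * wmc E η w = 0) :
    mc c E w = c w * wmc E w w := by
  unfold mc
  rw [Finset.sum_eq_single_of_mem w.length (Finset.mem_range.mpr (by omega))]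
  · rw [Fintype.sum_eq_single (fun i : Fin w.length => w.get i)]
    · rw [List.ofFn_get]
    · intro η hη
      apply h
      · simp
      · intro hcontra
        exact hη (List.ofFn_injective (by rw [hcontra, List.ofFn_get]))
  · intro k hk hkne
    apply Finset.sum_eq_zero
    intro η _
    apply h
    · simp [Finset.mem_range] at hk; simp; omega
    · intro hcontra
      apply hkne
      have := congrArg List.length hcontra
      simpa using this

lemma mc_zero_of (c : FPS 1) (E : FPST 1 1) (w : Word 1)
    (h : ∀ η : Word 1, η.length ≤ w.length → c η * wmc E η w = 0) : mc c E w = 0 := by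
  unfold mc
  apply Finset.sum_eq_zero
  intro k hk
  apply Finset.sum_eq_zero
  intro η _
  apply h
  simp [Finset.mem_range] at hk; simp; omega

lemma exists_of_mc_ne (c : FPS 1) (E : FPST 1 1) (w : Word 1) (h : mc c E w ≠ 0) :
    ∃ η : Word 1, η.length ≤ w.length ∧ c η ≠ 0 ∧ wmc E η w ≠ 0 := by
  by_contra h'
  push_neg at h'
  apply h
  apply mc_zero_of
  intro η hη
  by_cases hc : c η = 0
  · rw [hc]; ring
  · rw [h' η hη hc]; ring

lemma mc_nil (c : FPS 1) (E : FPST 1 1) : mc c E [] = c [] := by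
  simp [mc, wmc, unit]

lemma shInv_nil (c : FPS 1) : shInv c [] = (c [])⁻¹ := by
  simp [shInv, shInvAux, sh, unit]

lemma comp_nil (c : FPS 1) (dT : FPST 1 1) : comp c dT [] = c [] := by
  simp [comp, wcomp, unit]

lemma E_nil (c d : FPS 1) (hd : d [] ≠ 0) :
    (starInv (compT (fun _ : Fin 1 => shInv d) (fun _ : Fin 1 => c))) 0 [] = d [] := by
  show starInvAux _ 1 0 [] = d []
  show mcT _ _ 0 [] = d []
  unfold mcT
  rw [mc_nil]
  unfold shInvT
  rw [shInv_nil]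
  unfold compT
  rw [comp_nil]
  show (shInv d [])⁻¹ = d []
  rw [shInv_nil, inv_inv]

/-- Key lemma: `mc c E` has the same natural part as `c` and its forced part is controlled. -/
lemma natPart_mc (c : FPS 1) (E : FPST 1 1) (w : Word 1) (hw : ∀ x ∈ w, x = (none : Letter 1)) :
    mc c E w = c w := by
  obtain ⟨n, hn⟩ : ∃ n, w = List.replicate n (none : Letter 1) :=
    ⟨w.length, List.eq_replicate_iff.mpr ⟨rfl, hw⟩⟩
  rw [mc_single c E w]
  · rw [hn, wmc_pure, if_pos rfl, mul_one]
  · intro η hl hne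
    by_cases hη : ∀ x ∈ η, x = (none : Letter 1)
    · obtain ⟨k, hk⟩ : ∃ k, η = List.replicate k (none : Letter 1) :=
        ⟨η.length, List.eq_replicate_iff.mpr ⟨rfl, hη⟩⟩
      rw [hk, wmc_pure, if_neg (by rw [← hk]; exact fun h => hne h.symm), mul_zero]
    · obtain ⟨a, u, hu⟩ := decomp η hη
      by_cases hz : wmc E η w = 0
      · rw [hz, mul_zero]
      · obtain ⟨v, hv⟩ := wmc_prefix E 0 u a w (by rw [← hu]; exact hz)
        exfalso
        have : (some (0 : Fin 1) : Letter 1) = none := by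
          apply hw
          rw [hv]
          simp
        simp at this

lemma wmc_pure' (E : FPST 1 1) (η w : Word 1) (hη : ∀ x ∈ η, x = (none : Letter 1))
    (hne : w ≠ η) : wmc E η w = 0 := by
  obtain ⟨k, hk⟩ : ∃ k, η = List.replicate k (none : Letter 1) :=
    ⟨η.length, List.eq_replicate_iff.mpr ⟨rfl, hη⟩⟩
  rw [hk, wmc_pure, if_neg (by rw [← hk]; exact hne)]

lemma forced_pure (f : FPS 1) (w : Word 1) (hw : ∀ x ∈ w, x = (none : Letter 1)) :
    forcedPart f w = 0 := by
  unfold forcedPart natPart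
  rw [if_pos hw]
  ring

lemma forced_not_pure (f : FPS 1) (w : Word 1) (hw : ¬ ∀ x ∈ w, x = (none : Letter 1)) :
    forcedPart f w = f w := by
  simp [forcedPart, natPart, hw]

lemma len_rep_cons (k : ℕ) (i : Letter 1) (u : Word 1) :
    (List.replicate k (none : Letter 1) ++ i :: u).length = k + 1 + u.length := by
  simp; omega

lemma not_pure_rep_cons (k : ℕ) (i : Fin 1) (u : Word 1) :
    ¬ ∀ x ∈ List.replicate k (none : Letter 1) ++ some i :: u, x = (none : Letter 1) := by
  intro h
  have := h (some i) (by simp)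
  simp at this

end CFSAux

open CFSAux in
open CFS in
/-- For `X = {x_0, x_1}`, `c ∈ ℝ⟨⟨X⟩⟩` of class `r` and
`d ∈ ℝ⟨⟨X⟩⟩` with `d(𝟙) ≠ 0`, the multiplicative dynamic feedback product
`c @̌ d = c ⟲ (d^{⧢-1} ∘ c)^{⋆-1}` also has class `r`. -/
theorem feedback_class_invariance (c d : FPS 1) (r : ℕ∞)
    (hc : hasClass c r) (hd : d [] ≠ 0) :
    hasClass (fb1 c d) r := by
  classical
  set E := starInv (compT (fun _ : Fin 1 => shInv d) (fun _ : Fin 1 => c)) with hEdef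
  have hE : E 0 [] ≠ 0 := by rw [hEdef, E_nil c d hd]; exact hd
  have hfb : fb1 c d = mc c E := rfl
  rcases hc with ⟨hrtop, hcF⟩ | ⟨n, hrn, h1, h2, h3⟩
  · -- infinite class case
    left
    refine ⟨hrtop, funext fun w => ?_⟩
    have hcnat : ∀ η : Word 1, ¬ (∀ x ∈ η, x = (none : Letter 1)) → c η = 0 := by
      intro η hη
      have := congrFun hcF η
      rwa [forced_not_pure c η hη] at this
    rw [hfb]
    by_cases hw : ∀ x ∈ w, x = (none : Letter 1)
    · exact forced_pure _ w hw
    · rw [forced_not_pure _ w hw]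
      apply mc_zero_of
      intro η hl
      by_cases hη : ∀ x ∈ η, x = (none : Letter 1)
      · rw [wmc_pure' E η w hη (fun h => hw (h ▸ hη)), mul_zero]
      · rw [hcnat η hη, zero_mul]
  · -- finite class case
    right
    refine ⟨n, hrn, h1, ?_, ?_⟩
    · -- support of forced part
      intro w hw
      rw [hfb] at hw
      have hwp : ¬ ∀ x ∈ w, x = (none : Letter 1) := by
        intro hp; exact hw (forced_pure _ w hp)
      rw [forced_not_pure _ w hwp] at hw
      obtain ⟨η, hl, hcη, hwmc⟩ := exists_of_mc_ne c E w hw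
      have hηnp : ¬ ∀ x ∈ η, x = (none : Letter 1) := by
        intro hp
        by_cases hwe : w = η
        · exact hwp (hwe ▸ hp)
        · exact hwmc (wmc_pure' E η w hp hwe)
      obtain ⟨a, u, hu⟩ := decomp η hηnp
      have hfc : forcedPart c η ≠ 0 := by rwa [forced_not_pure c η hηnp]
      obtain ⟨v, hvne, hηv⟩ := h2 η hfc
      have han : n - 1 ≤ a := by
        by_contra hlt
        push_neg at hlt
        exact rep_append_ne hlt 0 u v (hu.symm.trans hηv)
      obtain ⟨v', hv'⟩ := wmc_prefix E 0 u a w (hu ▸ hwmc)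
      refine ⟨List.replicate (a - (n - 1)) (none : Letter 1) ++ some 0 :: v', by simp, ?_⟩
      rw [hv', show List.replicate a (none : Letter 1)
          = List.replicate (n - 1) (none : Letter 1) ++ List.replicate (a - (n - 1)) none from by
            rw [← List.replicate_add]; congr 1; omega,
        List.append_assoc]
    · -- existence of a witness word
      push_neg at h3
      obtain ⟨w₁, hw₁, hw₁'⟩ := h3
      obtain ⟨v₁, hv₁ne, hv₁⟩ := h2 w₁ hw₁
      have hQ : ∃ u : Word 1,
          forcedPart c (List.replicate (n - 1) (none : Letter 1) ++ some 0 :: u) ≠ 0 := by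
        match v₁, hv₁ne with
        | none :: t, _ =>
          exfalso
          have htne : t ≠ [] := by
            intro ht
            subst ht
            apply hw₁
            rw [hv₁]
            apply forced_pure
            intro x hx
            simp at hx
            rcases hx with ⟨-, hx⟩ | hx <;> exact hx
          apply hw₁' t htne
          rw [hv₁]
          have hn : n = (n - 1) + 1 := by omega
          rw [hn, List.replicate_succ', List.append_assoc]
          rfl
        | some i :: t, _ =>
          have : i = 0 := Subsingleton.elim _ _
          subst this
          exact ⟨t, hv₁ ▸ hw₁⟩
      set P : ℕ → Prop := fun L => ∃ u : Word 1, u.length = L ∧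
          forcedPart c (List.replicate (n - 1) (none : Letter 1) ++ some 0 :: u) ≠ 0 with hPdef
      have hP : ∃ L, P L := by
        obtain ⟨u, hu⟩ := hQ
        exact ⟨u.length, u, rfl, hu⟩
      obtain ⟨u₀, hu₀len, hu₀⟩ := Nat.find_spec hP
      set w₀ : Word 1 := List.replicate (n - 1) (none : Letter 1) ++ some 0 :: u₀ with hw₀def
      have hw₀np : ¬ ∀ x ∈ w₀, x = (none : Letter 1) := not_pure_rep_cons _ _ _
      have hcw₀ : c w₀ ≠ 0 := by
        rw [← forced_not_pure c w₀ hw₀np]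
        exact hu₀
      have hmc : mc c E w₀ = c w₀ * wmc E w₀ w₀ := by
        apply mc_single
        intro η hl hne
        by_cases hcη : c η = 0
        · rw [hcη, zero_mul]
        by_cases hwmc : wmc E η w₀ = 0
        · rw [hwmc, mul_zero]
        exfalso
        have hηnp : ¬ ∀ x ∈ η, x = (none : Letter 1) := by
          intro hp
          by_cases hwe : w₀ = η
          · exact hw₀np (hwe ▸ hp)
          · exact hwmc (wmc_pure' E η w₀ hp hwe)
        obtain ⟨a, u, hu⟩ := decomp η hηnp
        have hfc : forcedPart c η ≠ 0 := by rwa [forced_not_pure c η hηnp]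
        obtain ⟨v, hvne, hηv⟩ := h2 η hfc
        have han : n - 1 ≤ a := by
          by_contra hlt
          push_neg at hlt
          exact rep_append_ne hlt 0 u v (hu.symm.trans hηv)
        obtain ⟨v', hv'⟩ := wmc_prefix E 0 u a w₀ (hu ▸ hwmc)
        have ha : a = n - 1 := by
          by_contra hane
          have hlt : n - 1 < a := by omega
          exact rep_append_ne hlt 0 u₀ (some 0 :: v') (hw₀def.symm.trans hv')
        subst ha
        have hPu : P u.length := ⟨u, rfl, by rwa [← hu]⟩
        have hmin : Nat.find hP ≤ u.length := Nat.find_min' hP hPu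
        have hlen : w₀.length ≤ η.length := by
          rw [hw₀def, hu, len_rep_cons, len_rep_cons]
          omega
        exact hwmc (wmc_diag_ne E η w₀ (le_antisymm hlen hl) hne.symm)
      have hforced : forcedPart (fb1 c d) w₀ ≠ 0 := by
        rw [hfb, forced_not_pure _ w₀ hw₀np, hmc]
        exact mul_ne_zero hcw₀ (wmc_self_ne E hE w₀)
      intro hcon
      obtain ⟨v, hvne, hveq⟩ := hcon w₀ hforced
      exact rep_append_ne (show n - 1 < n by omega) 0 u₀ v (hw₀def.symm.trans hveq)
end

section
/- Let X = {x_0, x_1}, let c ∈ ℝ⟨⟨X⟩⟩ have relative degree r_c, and let d ∈ ℝ⟨⟨X⟩⟩ with d(𝟙) ≠ 0. Then the multiplicative dynamic feedback product c @̌ d := c ⟲ (d^{⧢-1} ∘ c)^{⋆-1} has relative degree r_c. -/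
open scoped BigOperators

section FeedbackAux
open CFS

lemma CFS.wmc_cons_nil (e : FPST 1 1) (x : Letter 1) (η : Word 1) :
    wmc e (x :: η) [] = 0 := by
  cases x <;> rfl

lemma CFS.wmc_replicate (e : FPST 1 1) (k : ℕ) :
    wmc e (List.replicate k (none : Letter 1)) =
      fun w => if w = List.replicate k (none : Letter 1) then 1 else 0 := by
  induction k with
  | zero => funext w; simp [wmc, unit]
  | succ k ih =>
    funext w
    rw [List.replicate_succ]
    cases w with
    | nil => simp [wmc, lc]
    | cons y u =>
      show lc none (wmc e (List.replicate k none)) (y :: u) = _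
      by_cases hy : y = (none : Letter 1)
      · subst hy; simp [lc, ih]
      · simp [lc, hy, Ne.symm hy]

lemma CFS.wmc_prepend (e : FPST 1 1) (a : ℕ) (η u : Word 1) :
    wmc e (List.replicate a (none : Letter 1) ++ η)
      (List.replicate a (none : Letter 1) ++ u) = wmc e η u := by
  induction a with
  | zero => simp
  | succ a ih =>
    rw [List.replicate_succ, List.cons_append, List.cons_append]
    show lc none (wmc e (List.replicate a none ++ η)) _ = _
    simp [lc, ih]

lemma CFS.wmc_append_replicate (e : FPST 1 1) (a : ℕ) (η : Word 1) :
    ∀ w : Word 1, wmc e (List.replicate a (none : Letter 1) ++ η) w ≠ 0 →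
      ∃ u, w = List.replicate a (none : Letter 1) ++ u ∧ wmc e η u ≠ 0 := by
  induction a with
  | zero => intro w h; exact ⟨w, by simp, by simpa using h⟩
  | succ a ih =>
    intro w h
    rw [List.replicate_succ, List.cons_append] at h
    cases w with
    | nil =>
      exact absurd h (by simp [CFS.wmc_cons_nil])
    | cons y u =>
      have h' : lc none (wmc e (List.replicate a none ++ η)) (y :: u) ≠ 0 := h
      by_cases hy : y = (none : Letter 1)
      · subst hy
        simp only [lc, if_pos rfl] at h'
        obtain ⟨u', hu', hne⟩ := ih u h'
        exact ⟨u', by rw [List.replicate_succ, List.cons_append, hu'], hne⟩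
      · simp [lc, hy] at h'

lemma CFS.sum_fin_zero (f : (Fin 0 → Letter 1) → ℝ) :
    ∑ η : Fin 0 → Letter 1, f η = f (fun i => i.elim0) := by
  rw [Fintype.sum_unique]
  congr 1

lemma CFS.mc_nil_s15 (c' : FPS 1) (d' : FPST 1 1) : mc c' d' [] = c' [] := by
  show (∑ k ∈ Finset.range 1, ∑ η : Fin k → Letter 1,
    c' (List.ofFn η) * wmc d' (List.ofFn η) []) = c' []
  rw [Finset.sum_range_one, CFS.sum_fin_zero]
  simp [wmc, unit]

lemma CFS.comp_nil_s15 (c' : FPS 1) (d' : FPST 1 1) : comp c' d' [] = c' [] := by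
  show (∑ k ∈ Finset.range 1, ∑ η : Fin k → Letter 1,
    c' (List.ofFn η) * wcomp d' (List.ofFn η) []) = c' []
  rw [Finset.sum_range_one, CFS.sum_fin_zero]
  simp [wcomp, unit]

lemma CFS.shInv_nil_s15 (c' : FPS 1) : shInv c' [] = (c' [])⁻¹ := by
  show shInvAux c' 1 [] = (c' [])⁻¹
  simp [shInvAux, sh, unit]

end FeedbackAux

open CFS in
/-- For `X = {x_0, x_1}`, if `c ∈ ℝ⟨⟨X⟩⟩` has relative degree `r_c`
and `d(𝟙) ≠ 0`, then `c @̌ d = c ⟲ (d^{⧢-1} ∘ c)^{⋆-1}` has relative degree `r_c`. -/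
theorem feedback_relative_degree (c d : FPS 1) (r : ℕ)
    (hc : hasRelDeg c r) (hd : d [] ≠ 0) :
    hasRelDeg (fb1 c d) r := by
  obtain ⟨⟨hr1, hsupp, -⟩, hcoef⟩ := hc
  set e : FPST 1 1 := starInv (compT (fun _ : Fin 1 => shInv d) (fun _ : Fin 1 => c))
    with he_def
  set w0 : Word 1 := List.replicate (r - 1) (none : Letter 1) ++ [some 0] with hw0_def
  have he0 : e 0 [] = d [] := by
    show mc (shInv (compT (fun _ : Fin 1 => shInv d) (fun _ : Fin 1 => c) 0))
      (starInvAux (compT (fun _ : Fin 1 => shInv d) (fun _ : Fin 1 => c)) 0) [] = d []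
    rw [CFS.mc_nil_s15, CFS.shInv_nil_s15]
    have hb : compT (fun _ : Fin 1 => shInv d) (fun _ : Fin 1 => c) 0 [] = (d [])⁻¹ := by
      show comp (shInv d) (fun _ : Fin 1 => c) [] = _
      rw [CFS.comp_nil_s15, CFS.shInv_nil_s15]
    rw [hb, inv_inv]
  have hG : ∀ w : Word 1, fb1 c d w = ∑ k ∈ Finset.range (w.length + 1),
      ∑ η : Fin k → Letter 1, c (List.ofFn η) * wmc e (List.ofFn η) w := fun _ => rfl
  have hw0nat : ¬ (∀ x ∈ w0, x = (none : Letter 1)) := by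
    intro h
    have := h (some 0) (by simp [hw0_def])
    simp at this
  have hlen0 : w0.length = r := by
    simp [hw0_def]
    omega
  have hcw0 : c w0 ≠ 0 := by
    have h1 : natPart c w0 = 0 := by
      simp only [natPart]; rw [if_neg hw0nat]
    intro h
    apply hcoef
    show c w0 - natPart c w0 = 0
    rw [h1, h, sub_zero]
  -- every term with η0 ≠ w0 vanishes at w0
  have hterm : ∀ η0 : Word 1, η0 ≠ w0 → c η0 * wmc e η0 w0 = 0 := by
    intro η0 hne
    by_cases hc0 : c η0 = 0
    · simp [hc0]
    suffices h : wmc e η0 w0 = 0 by simp [h]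
    by_contra hw
    by_cases hnatη : ∀ x ∈ η0, x = (none : Letter 1)
    · have hrep : η0 = List.replicate η0.length (none : Letter 1) :=
        List.eq_replicate_of_mem hnatη
      rw [hrep, CFS.wmc_replicate] at hw
      simp only [ne_eq, ite_eq_right_iff, one_ne_zero, imp_false, not_not] at hw
      exact hne (by rw [hrep, ← hw])
    · have h1 : natPart c η0 = 0 := by
        simp only [natPart]; rw [if_neg hnatη]
      have hfp : forcedPart c η0 ≠ 0 := by
        show c η0 - natPart c η0 ≠ 0
        rw [h1, sub_zero]; exact hc0
      obtain ⟨v, hv, hη0⟩ := hsupp η0 hfp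
      rw [hη0] at hw
      obtain ⟨u, hu, hvu⟩ := CFS.wmc_append_replicate e (r - 1) v w0 hw
      have hu' : u = [some 0] := by
        have h2 : List.replicate (r - 1) (none : Letter 1) ++ [some 0]
            = List.replicate (r - 1) (none : Letter 1) ++ u := by rw [← hw0_def, hu]
        exact (List.append_cancel_left h2).symm
      rw [hu'] at hvu
      cases v with
      | nil => exact hv rfl
      | cons x t =>
        cases x with
        | none => simp [wmc, lc] at hvu
        | some i =>
          have hi : i = 0 := Subsingleton.elim i 0
          subst hi
          have hvu' : sh (e 0) (wmc e t) [] ≠ 0 := by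
            simpa [wmc, lc] using hvu
          cases t with
          | nil =>
            exact hne (by rw [hη0])
          | cons x' t' =>
            rw [show sh (e 0) (wmc e (x' :: t')) [] =
              e 0 [] * wmc e (x' :: t') [] from rfl,
              CFS.wmc_cons_nil] at hvu'
            simp at hvu'
  -- the value at w0
  have hval : fb1 c d w0 = c w0 * d [] := by
    have hwmc : wmc e w0 w0 = d [] := by
      rw [hw0_def, CFS.wmc_prepend]
      show lc (some 0) (sh (e 0) (wmc e [])) [some 0] = d []
      simp [lc, sh, wmc, unit, he0]
    rw [hG w0]
    have hinner : ∀ k ∈ Finset.range (w0.length + 1),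
        (∑ η : Fin k → Letter 1, c (List.ofFn η) * wmc e (List.ofFn η) w0)
          = if k = r then c w0 * d [] else 0 := by
      intro k _
      by_cases hk : k = r
      · subst hk
        rw [if_pos rfl]
        set ηstar : Fin k → Letter 1 :=
          fun i => if (i : ℕ) < k - 1 then none else some 0 with hηstar
        have hofn : List.ofFn ηstar =
            List.replicate (k - 1) (none : Letter 1) ++ [some 0] := by
          apply List.ext_getElem
          · simp
            omega
          · intro i h1 h2
            rw [List.getElem_ofFn]
            by_cases hi : i < k - 1
            · rw [List.getElem_append_left (by simpa using hi)]
              simp [hηstar, hi]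
            · have hik : i < k := by simpa using h1
              have hi' : i = k - 1 := by omega
              rw [List.getElem_append_right (by simp [hi'])]
              simp [hηstar, hi, hi']
        rw [Finset.sum_eq_single_of_mem ηstar (Finset.mem_univ _)
          (fun η _ hne => hterm _ (fun hcontra => hne
            (List.ofFn_injective (hcontra.trans (hw0_def.trans hofn.symm)))))]
        rw [hofn, ← hw0_def, hwmc]
      · rw [if_neg hk]
        apply Finset.sum_eq_zero
        intro η _
        apply hterm
        intro hcontra
        apply hk
        have := congrArg List.length hcontra
        simpa [hlen0] using this
    rw [Finset.sum_congr rfl hinner]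
    rw [Finset.sum_ite_eq' (Finset.range (w0.length + 1)) r (fun _ => c w0 * d [])]
    rw [if_pos (by simp [hlen0])]
  -- support of the forced part of the feedback
  have hfp0 : ∀ w : Word 1, (∀ x ∈ w, x = (none : Letter 1)) →
      forcedPart (fb1 c d) w = 0 := by
    intro w hnat
    show fb1 c d w - natPart (fb1 c d) w = 0
    simp only [natPart]
    rw [if_pos hnat, sub_self]
  have hGsupp : ∀ w, forcedPart (fb1 c d) w ≠ 0 →
      ∃ v, v ≠ [] ∧ w = List.replicate (r - 1) (none : Letter 1) ++ v := by
    intro w hw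
    by_cases hnat : ∀ x ∈ w, x = (none : Letter 1)
    · exact absurd (hfp0 w hnat) hw
    · have h1 : natPart (fb1 c d) w = 0 := by
        simp only [natPart]; rw [if_neg hnat]
      have hGw : fb1 c d w ≠ 0 := by
        intro h
        apply hw
        show fb1 c d w - natPart (fb1 c d) w = 0
        rw [h1, h, sub_zero]
      rw [hG w] at hGw
      obtain ⟨k, -, hk⟩ := Finset.exists_ne_zero_of_sum_ne_zero hGw
      obtain ⟨η, -, hη⟩ := Finset.exists_ne_zero_of_sum_ne_zero hk
      have hc0 : c (List.ofFn η) ≠ 0 := fun h => hη (by rw [h, zero_mul])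
      have hwη : wmc e (List.ofFn η) w ≠ 0 := fun h => hη (by rw [h, mul_zero])
      by_cases hnatη : ∀ x ∈ List.ofFn η, x = (none : Letter 1)
      · have hrep : List.ofFn η = List.replicate (List.ofFn η).length (none : Letter 1) :=
          List.eq_replicate_of_mem hnatη
        rw [hrep, CFS.wmc_replicate] at hwη
        simp only [ne_eq, ite_eq_right_iff, one_ne_zero, imp_false, not_not] at hwη
        exact absurd (fun x hx => List.eq_of_mem_replicate (by rwa [← hwη])) hnat
      · have h2 : natPart c (List.ofFn η) = 0 := by
          simp only [natPart]; rw [if_neg hnatη]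
        have hfp : forcedPart c (List.ofFn η) ≠ 0 := by
          show c (List.ofFn η) - natPart c (List.ofFn η) ≠ 0
          rw [h2, sub_zero]; exact hc0
        obtain ⟨v, hv, hη0eq⟩ := hsupp (List.ofFn η) hfp
        rw [hη0eq] at hwη
        obtain ⟨u, hu, hvu⟩ := CFS.wmc_append_replicate e (r - 1) v w hwη
        refine ⟨u, ?_, hu⟩
        intro hunil
        rw [hunil] at hvu
        cases v with
        | nil => exact hv rfl
        | cons x t => exact hvu (CFS.wmc_cons_nil e x t)
  have hfbw0 : forcedPart (fb1 c d) w0 ≠ 0 := by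
    have h1 : natPart (fb1 c d) w0 = 0 := by
      simp only [natPart]; rw [if_neg hw0nat]
    show fb1 c d w0 - natPart (fb1 c d) w0 ≠ 0
    rw [h1, sub_zero, hval]
    exact mul_ne_zero hcw0 hd
  refine ⟨⟨hr1, hGsupp, ?_⟩, hfbw0⟩
  intro hall
  obtain ⟨v, hv, hveq⟩ := hall w0 hfbw0
  have hlv := congrArg List.length hveq
  rw [hlen0, List.length_append, List.length_replicate] at hlv
  have hvpos : 0 < v.length := List.length_pos_iff.mpr hv
  omega
end

section
/- Let k be a field of characteristic zero and let (A, ⊘, •) be a right com-pre-Lie algebra over k. Then: (1) the bilinear product a ⋄ b := a • b + a ⊘ b is a right pre-Lie product on A, i.e., (a ⋄ b) ⋄ c − a ⋄ (b ⋄ c) = (a ⋄ c) ⋄ b − a ⋄ (c ⋄ b) for all a, b, c ∈ A; (2) the derived Lie brackets of ⋄ and of • coincide: a ⋄ b − b ⋄ a = a • b − b • a for all a, b ∈ A. -/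
open scoped BigOperators

/-- Over a field `k` of characteristic zero, if `(A, ⊘, •)` is a
right com-pre-Lie algebra, then `a ⋄ b := a • b + a ⊘ b` is again a right pre-Lie
product on `A`, and the derived Lie brackets of `⋄` and `•` coincide. -/
theorem comPreLie_new_preLie (k : Type*) [Field k] [CharZero k]
    (A : Type*) [AddCommGroup A] [Module k A]
    (osl bul : A →ₗ[k] A →ₗ[k] A)
    (hcomm : ∀ a b : A, osl a b = osl b a)
    (hassoc : ∀ a b c : A, osl (osl a b) c = osl a (osl b c))
    (hpre : ∀ a b c : A,
      bul (bul a b) c - bul a (bul b c) = bul (bul a c) b - bul a (bul c b))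
    (hcompre : ∀ a b c : A,
      bul (osl a b) c = osl (bul a c) b + osl a (bul b c)) :
    (∀ a b c : A,
      ((bul (bul a b + osl a b) c + osl (bul a b + osl a b) c)
        - (bul a (bul b c + osl b c) + osl a (bul b c + osl b c)))
      = ((bul (bul a c + osl a c) b + osl (bul a c + osl a c) b)
        - (bul a (bul c b + osl c b) + osl a (bul c b + osl c b)))) ∧
    (∀ a b : A, (bul a b + osl a b) - (bul b a + osl b a) = bul a b - bul b a) := by
  constructor
  · intro a b c
    have h := hpre a b c
    simp only [map_add, LinearMap.add_apply, hcompre, hassoc, hcomm b c]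
    rw [← sub_eq_zero] at h ⊢
    rw [← h]
    abel
  · intro a b
    rw [hcomm a b]
    abel
end

section
/- Let X = {x_0,...,x_m}, let g : span_ℝ(X) → span_ℝ(X) be any linear map, and let ◁ be the associated product on the space ℝ_p^m⟨X⟩ of m-tuples of noncommutative polynomials with zero constant term. Then ◁ is a derivation in its left argument with respect to both the shuffle product and the adorned shuffle products: for all c, d, h ∈ ℝ_p^m⟨X⟩ and all k = 1,...,m, (i) (c ⧢ d) ◁ h = (c ◁ h) ⧢ d + c ⧢ (d ◁ h), and (ii) (c ⧢_k d) ◁ h = (c ◁ h) ⧢_k d + c ⧢_k (d ◁ h). -/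
open scoped BigOperators

namespace CPL

open CFS

noncomputable section

/-- Left concatenation on tuples. -/
def lcT {m : ℕ} (x : Letter m) (p : FPST m m) : FPST m m := fun j => lc x (p j)

/-- Adorned shuffle `(c ⧢_j d)_k := c_k ⧢ d_j`. -/
def shAd {m : ℕ} (c d : FPST m m) (j : Fin m) : FPST m m := fun k => sh (c k) (d j)

/-- Letter-indexed adorned shuffle, with the convention `c ⧢_0 d := 0` for `x_0`. -/
def shL {m : ℕ} (c d : FPST m m) : Letter m → FPST m m
  | none => 0
  | some j => shAd c d j

/-- Apply `g(x) = Σ_y G x y · y` (the linear map `g` on `span_ℝ(X)` given by its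
coefficient matrix `G`) to a tuple by left concatenation. -/
def gApp {m : ℕ} (G : Letter m → Letter m → ℝ) (x : Letter m) (p : FPST m m) : FPST m m :=
  fun j w => ∑ y : Letter m, G x y * lc y (p j) w

/-- The basis tuple `w e_j`. -/
def basT {m : ℕ} (w : Word m) (j : Fin m) : FPST m m :=
  fun k u => if k = j ∧ u = w then 1 else 0

/-- `(w e_j) ◁ d` on basis elements, by recursion on the word `w`:
`(x_i e_j) ◁ d = g(x_i) d_i e_j` and `(x_i c) ◁ d = x_i (c ◁ d) + g(x_i)(c ⧢_i d)`,
with the conventions `d_0 = 0`, `⧢_0 = 0`. -/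
def triW {m : ℕ} (G : Letter m → Letter m → ℝ) (d : FPST m m) : Word m → Fin m → FPST m m
  | [], _ => 0
  | x :: c, j => lcT x (triW G d c j) + gApp G x (shL (basT c j) d x)

/-- The product `c ◁ d` associated with `g` (linear extension of `triW`; since
`(η e_i) ◁ d` is supported on words of length `≥ |η|`, only `η` with `|η| ≤ |w|`
contribute to the coefficient at `w`). -/
def tri {m : ℕ} (G : Letter m → Letter m → ℝ) (c d : FPST m m) : FPST m m :=
  fun j w => ∑ k ∈ Finset.range (w.length + 1),
    ∑ η : Fin k → Letter m, ∑ i : Fin m,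
      c i (List.ofFn η) * triW G d (List.ofFn η) i j w

/-- Membership in `ℝ_p^m⟨X⟩`: an `m`-tuple of polynomials with zero constant term. -/
def ProperPoly {m : ℕ} (c : FPST m m) : Prop :=
  (∀ j, c j [] = 0) ∧ {p : Fin m × Word m | c p.1 p.2 ≠ 0}.Finite

end

end CPL

namespace Proof17

open CFS CPL

variable {m : ℕ}

/-- Left derivative of a series by a letter. -/
def der (x : Letter m) (a : FPS m) : FPS m := fun u => a (x :: u)

lemma sh_nil (a b : FPS m) : sh a b [] = a [] * b [] := rfl

lemma sh_cons (a b : FPS m) (x : Letter m) (w : Word m) :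
    sh a b (x :: w) = sh (der x a) b w + sh a (der x b) w := rfl

lemma sh_add_left (a a' b : FPS m) (w : Word m) :
    sh (fun u => a u + a' u) b w = sh a b w + sh a' b w := by
  induction w generalizing a a' b with
  | nil => simp only [sh_nil]; ring
  | cons x w ih =>
    rw [sh_cons, sh_cons, sh_cons]
    have h1 : der x (fun u => a u + a' u) = fun u => der x a u + der x a' u := rfl
    rw [h1, ih, ih]; ring

lemma sh_zero_left (b : FPS m) (w : Word m) : sh (fun _ => 0) b w = 0 := by
  induction w generalizing b with
  | nil => simp [sh_nil]
  | cons x w ih =>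
    rw [sh_cons]
    have h1 : der x (fun _ : Word m => (0 : ℝ)) = fun _ => (0 : ℝ) := rfl
    rw [h1, ih, ih]; ring

lemma sh_smul_left (r : ℝ) (a b : FPS m) (w : Word m) :
    sh (fun u => r * a u) b w = r * sh a b w := by
  induction w generalizing a b with
  | nil => simp only [sh_nil]; ring
  | cons x w ih =>
    rw [sh_cons, sh_cons]
    have h1 : der x (fun u => r * a u) = fun u => r * der x a u := rfl
    rw [h1, ih, ih]; ring

lemma sh_comm (a b : FPS m) (w : Word m) : sh a b w = sh b a w := by
  induction w generalizing a b with
  | nil => simp only [sh_nil]; ring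
  | cons x w ih => rw [sh_cons, sh_cons, ih, ih a (der x b)]; ring

lemma sh_add_right (a b b' : FPS m) (w : Word m) :
    sh a (fun u => b u + b' u) w = sh a b w + sh a b' w := by
  rw [sh_comm, sh_add_left, sh_comm b a, sh_comm b' a]

lemma sh_assoc (a b c : FPS m) (w : Word m) :
    sh (sh a b) c w = sh a (sh b c) w := by
  induction w generalizing a b c with
  | nil => simp only [sh_nil]; ring
  | cons x w ih =>
    rw [sh_cons, sh_cons]
    have h1 : der x (sh a b) = fun u => sh (der x a) b u + sh a (der x b) u := rfl
    have h2 : der x (sh b c) = fun u => sh (der x b) c u + sh b (der x c) u := rfl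
    rw [h1, h2, sh_add_left, sh_add_right, ih, ih, ih]
    ring

lemma sh_sum_left {ι : Type*} (s : Finset ι) (f : ι → FPS m) (b : FPS m) (w : Word m) :
    sh (fun u => ∑ i ∈ s, f i u) b w = ∑ i ∈ s, sh (f i) b w := by
  classical
  induction s using Finset.induction_on with
  | empty => simpa using sh_zero_left b w
  | insert i s hx ih =>
    have h1 : (fun u => ∑ j ∈ insert i s, f j u)
        = fun u => f i u + ∑ j ∈ s, f j u := by
      funext u; rw [Finset.sum_insert hx]
    rw [h1, sh_add_left, ih, Finset.sum_insert hx]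

lemma sh_sum_right {ι : Type*} (s : Finset ι) (a : FPS m) (f : ι → FPS m) (w : Word m) :
    sh a (fun u => ∑ i ∈ s, f i u) w = ∑ i ∈ s, sh a (f i) w := by
  rw [sh_comm, sh_sum_left]
  exact Finset.sum_congr rfl fun i _ => sh_comm _ _ _

/-- The indicator series of a word. -/
def indW (c : Word m) : FPS m := fun u => if u = c then 1 else 0

/-- `sLW d x c`: the shuffle term attached to letter `x` and word `c`. -/
def sLW (d : FPST m m) : Letter m → Word m → FPS m
  | none, _ => fun _ => 0
  | some i, c => sh (indW c) (d i)

/-- Scalar version of `triW`: `(η e_i) ◁ d` lives entirely in component `i`,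
with value `tauW G d η`. -/
def tauW (G : Letter m → Letter m → ℝ) (d : FPST m m) : Word m → FPS m
  | [] => fun _ => 0
  | x :: c => fun u => lc x (tauW G d c) u + ∑ y, G x y * lc y (sLW d x c) u

lemma lc_congr (x : Letter m) {p q : FPS m} (h : ∀ u, p u = q u) (u : Word m) :
    lc x p u = lc x q u := by
  cases u with
  | nil => rfl
  | cons y v => simp only [lc, h v]

lemma lc_zero (x : Letter m) (u : Word m) : lc x (fun _ => 0) u = 0 := by
  cases u with
  | nil => rfl
  | cons y v => simp [lc]

lemma shL_basT (d : FPST m m) (c : Word m)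
    (x : Letter m) (i j : Fin m) (u : Word m) :
    shL (basT c i) d x j u = if j = i then sLW d x c u else 0 := by
  cases x with
  | none => simp [shL, sLW]
  | some y =>
    show sh (basT c i j) (d y) u = if j = i then sh (indW c) (d y) u else 0
    by_cases hji : j = i
    · have : basT c i j = indW c := by
        funext v; simp [basT, indW, hji]
      rw [this, if_pos hji]
    · have : basT c i j = fun _ => 0 := by
        funext v; simp [basT, hji]
      rw [this, sh_zero_left, if_neg hji]

lemma triW_eq (G : Letter m → Letter m → ℝ) (d : FPST m m) (w : Word m)
    (i j : Fin m) (u : Word m) :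
    triW G d w i j u = if j = i then tauW G d w u else 0 := by
  induction w generalizing u with
  | nil => simp [triW, tauW]
  | cons x c ih =>
    show lc x (triW G d c i j) u + ∑ y, G x y * lc y (shL (basT c i) d x j) u = _
    have h1 : lc x (triW G d c i j) u
        = lc x (fun v => if j = i then tauW G d c v else 0) u :=
      lc_congr x (fun v => ih v) u
    have h2 : ∀ y, lc y (shL (basT c i) d x j) u
        = lc y (fun v => if j = i then sLW d x c v else 0) u :=
      fun y => lc_congr y (fun v => shL_basT d c x i j v) u
    rw [h1]
    by_cases hji : j = i
    · simp only [hji, if_true] at h2 ⊢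
      simp only [h2]
      rfl
    · simp only [hji, if_false] at h2 ⊢
      simp only [h2, lc_zero, mul_zero, Finset.sum_const_zero, add_zero]

/-- Linear extension of `tauW` to series (truncated to relevant word lengths). -/
def Tser (G : Letter m → Letter m → ℝ) (d : FPST m m) (a : FPS m) : FPS m :=
  fun w => ∑ k ∈ Finset.range (w.length + 1),
    ∑ η : Fin k → Letter m, a (List.ofFn η) * tauW G d (List.ofFn η) w

lemma tauW_nil (G : Letter m → Letter m → ℝ) (d : FPST m m) (w : Word m) :
    tauW G d w [] = 0 := by
  cases w with
  | nil => rfl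
  | cons x c =>
    show lc x (tauW G d c) [] + ∑ y, G x y * lc y (sLW d x c) [] = 0
    have h : ∀ p : FPS m, ∀ y : Letter m, lc y p [] = 0 := fun p y => rfl
    simp [h]

lemma tri_eq (G : Letter m → Letter m → ℝ) (c d : FPST m m) (j : Fin m) (w : Word m) :
    tri G c d j w = Tser G d (c j) w := by
  unfold tri Tser
  refine Finset.sum_congr rfl fun k _ => Finset.sum_congr rfl fun η _ => ?_
  simp only [triW_eq, mul_ite, mul_zero]
  simp

lemma sum_fn_succ (k : ℕ) (F : (Fin (k+1) → Letter m) → ℝ) :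
    ∑ η : Fin (k+1) → Letter m, F η
      = ∑ x : Letter m, ∑ η : Fin k → Letter m, F (Fin.cons x η) := by
  rw [← (Fin.consEquiv (fun _ : Fin (k+1) => Letter m)).sum_comp, Fintype.sum_prod_type]
  rfl

lemma ofFn_cons (k : ℕ) (x : Letter m) (η : Fin k → Letter m) :
    List.ofFn (Fin.cons x η : Fin (k+1) → Letter m) = x :: List.ofFn η := by
  rw [List.ofFn_succ]
  simp

lemma der_indW_nil (z : Letter m) : der z (indW ([] : Word m)) = fun _ => 0 := by
  funext u; simp [der, indW]

lemma der_indW_cons_eq (x : Letter m) (c : Word m) :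
    der x (indW (x :: c)) = indW c := by
  funext u
  simp [der, indW]

lemma der_indW_cons_ne {z x : Letter m} (hxz : x ≠ z) (c : Word m) :
    der z (indW (x :: c)) = fun _ => 0 := by
  funext u
  have : ¬ (z = x) := fun h => hxz h.symm
  simp [der, indW, this]

lemma sh_indW_long (c : Word m) (e : FPS m) (w : Word m) (h : w.length < c.length) :
    sh (indW c) e w = 0 := by
  induction w generalizing c e with
  | nil =>
    cases c with
    | nil => exact absurd h (by simp)
    | cons x c' => simp [sh_nil, indW]
  | cons z w ih =>
    rw [sh_cons]
    cases c with
    | nil => exact absurd h (by simp)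
    | cons x c' =>
      by_cases hxz : x = z
      · subst hxz
        rw [der_indW_cons_eq]
        rw [ih c' e (by simpa using h), ih (x :: c') (der x e) (Nat.lt_of_succ_lt h)]
        ring
      · rw [der_indW_cons_ne hxz]
        rw [sh_zero_left, ih (x :: c') (der z e) (Nat.lt_of_succ_lt h)]
        ring

lemma sh_expand (w : Word m) (b e : FPS m) :
    ∑ k ∈ Finset.range (w.length + 1), ∑ η : Fin k → Letter m,
      b (List.ofFn η) * sh (indW (List.ofFn η)) e w = sh b e w := by
  classical
  induction w generalizing b e with
  | nil =>
    rw [show ([] : Word m).length + 1 = 1 from rfl, Finset.sum_range_one]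
    simp only [Fintype.sum_unique, List.ofFn_zero]
    rw [sh_nil, sh_nil]
    simp [indW]
  | cons z w ih =>
    -- split each summand via sh_cons
    have hsplit : ∀ k ∈ Finset.range ((z :: w).length + 1),
        (∑ η : Fin k → Letter m, b (List.ofFn η) * sh (indW (List.ofFn η)) e (z :: w))
        = (∑ η : Fin k → Letter m, b (List.ofFn η) * sh (der z (indW (List.ofFn η))) e w)
          + (∑ η : Fin k → Letter m, b (List.ofFn η) * sh (indW (List.ofFn η)) (der z e) w) := by
      intro k _
      rw [← Finset.sum_add_distrib]
      refine Finset.sum_congr rfl fun η _ => ?_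
      rw [sh_cons]; ring
    rw [Finset.sum_congr rfl hsplit, Finset.sum_add_distrib]
    -- Second part: sum over range (w.length + 2) of B k
    have hB : ∑ k ∈ Finset.range ((z :: w).length + 1), ∑ η : Fin k → Letter m,
        b (List.ofFn η) * sh (indW (List.ofFn η)) (der z e) w = sh b (der z e) w := by
      rw [show (z :: w).length + 1 = (w.length + 1) + 1 from rfl]
      rw [Finset.sum_range_succ]
      have htop : ∑ η : Fin (w.length + 1) → Letter m,
          b (List.ofFn η) * sh (indW (List.ofFn η)) (der z e) w = 0 := by
        refine Finset.sum_eq_zero fun η _ => ?_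
        rw [sh_indW_long _ _ _ (by simp), mul_zero]
      rw [htop, add_zero, ih]
    -- First part
    have hA : ∑ k ∈ Finset.range ((z :: w).length + 1), ∑ η : Fin k → Letter m,
        b (List.ofFn η) * sh (der z (indW (List.ofFn η))) e w = sh (der z b) e w := by
      rw [show (z :: w).length + 1 = (w.length + 1) + 1 from rfl]
      rw [Finset.sum_range_succ' _ (w.length + 1)]
      have h0 : ∑ η : Fin 0 → Letter m,
          b (List.ofFn η) * sh (der z (indW (List.ofFn η))) e w = 0 := by
        simp only [Fintype.sum_unique, List.ofFn_zero]
        rw [der_indW_nil, sh_zero_left, mul_zero]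
      rw [h0, add_zero]
      have hsucc : ∀ k ∈ Finset.range (w.length + 1),
          (∑ η : Fin (k+1) → Letter m, b (List.ofFn η) * sh (der z (indW (List.ofFn η))) e w)
          = ∑ η : Fin k → Letter m, b (z :: List.ofFn η) * sh (indW (List.ofFn η)) e w := by
        intro k _
        rw [sum_fn_succ k (fun η => b (List.ofFn η) * sh (der z (indW (List.ofFn η))) e w)]
        have hterm : ∀ x : Letter m, ∀ η : Fin k → Letter m,
            b (List.ofFn (Fin.cons x η : Fin (k+1) → Letter m))
              * sh (der z (indW (List.ofFn (Fin.cons x η : Fin (k+1) → Letter m)))) e w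
            = if x = z then b (z :: List.ofFn η) * sh (indW (List.ofFn η)) e w else 0 := by
          intro x η
          rw [ofFn_cons]
          by_cases hxz : x = z
          · subst hxz
            rw [der_indW_cons_eq, if_pos rfl]
          · rw [der_indW_cons_ne hxz, if_neg hxz, sh_zero_left, mul_zero]
        rw [Finset.sum_congr rfl fun x _ => Finset.sum_congr rfl fun η _ => hterm x η]
        rw [Finset.sum_comm]
        refine Finset.sum_congr rfl fun η _ => ?_
        rw [Finset.sum_ite_eq' Finset.univ z
          (fun _ => b (z :: List.ofFn η) * sh (indW (List.ofFn η)) e w)]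
        simp
      rw [Finset.sum_congr rfl hsucc, ← ih (der z b) e]
      rfl
    rw [hA, hB, sh_cons]

/-- Scalar shuffle term for series. -/
def sLS (d : FPST m m) : Letter m → FPS m → FPS m
  | none, _ => fun _ => 0
  | some i, a => sh a (d i)

lemma Tser_nil (G : Letter m → Letter m → ℝ) (d : FPST m m) (a : FPS m) :
    Tser G d a [] = 0 := by
  refine Finset.sum_eq_zero fun k _ => Finset.sum_eq_zero fun η _ => ?_
  rw [tauW_nil, mul_zero]

lemma Tser_add (G : Letter m → Letter m → ℝ) (d : FPST m m) (p q : FPS m) (w : Word m) :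
    Tser G d (fun u => p u + q u) w = Tser G d p w + Tser G d q w := by
  simp [Tser, add_mul, Finset.sum_add_distrib]

lemma tauW_cons_cons (G : Letter m → Letter m → ℝ) (d : FPST m m)
    (x : Letter m) (c : Word m) (z : Letter m) (w : Word m) :
    tauW G d (x :: c) (z :: w)
      = (if z = x then tauW G d c w else 0) + G x z * sLW d x c w := by
  show lc x (tauW G d c) (z :: w) + ∑ y, G x y * lc y (sLW d x c) (z :: w) = _
  have hl : ∀ p : FPS m, ∀ y : Letter m, lc y p (z :: w) = if z = y then p w else 0 :=
    fun p y => rfl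
  simp only [hl, mul_ite, mul_zero, Finset.sum_ite_eq, Finset.mem_univ, if_true]

lemma Tser_cons (G : Letter m → Letter m → ℝ) (d : FPST m m) (a : FPS m)
    (z : Letter m) (w : Word m) :
    Tser G d a (z :: w)
      = Tser G d (der z a) w + ∑ x : Letter m, G x z * sLS d x (der x a) w := by
  classical
  have hsucc : ∀ k ∈ Finset.range (w.length + 1),
      (∑ η : Fin (k+1) → Letter m, a (List.ofFn η) * tauW G d (List.ofFn η) (z :: w))
      = (∑ η : Fin k → Letter m, a (z :: List.ofFn η) * tauW G d (List.ofFn η) w)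
        + ∑ x : Letter m, ∑ η : Fin k → Letter m,
            a (x :: List.ofFn η) * (G x z * sLW d x (List.ofFn η) w) := by
    intro k _
    rw [sum_fn_succ k (fun η => a (List.ofFn η) * tauW G d (List.ofFn η) (z :: w))]
    have hterm : ∀ x : Letter m, ∀ η : Fin k → Letter m,
        a (List.ofFn (Fin.cons x η : Fin (k+1) → Letter m))
          * tauW G d (List.ofFn (Fin.cons x η : Fin (k+1) → Letter m)) (z :: w)
        = (if z = x then a (x :: List.ofFn η) * tauW G d (List.ofFn η) w else 0)
          + a (x :: List.ofFn η) * (G x z * sLW d x (List.ofFn η) w) := by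
      intro x η
      rw [ofFn_cons, tauW_cons_cons, mul_add, mul_ite, mul_zero]
    rw [Finset.sum_congr rfl fun x _ => Finset.sum_congr rfl fun η _ => hterm x η]
    rw [Finset.sum_congr rfl fun x _ => Finset.sum_add_distrib (s := Finset.univ)]
    rw [Finset.sum_add_distrib]
    congr 1
    rw [Finset.sum_comm]
    refine Finset.sum_congr rfl fun η _ => ?_
    rw [Finset.sum_ite_eq Finset.univ z
      (fun x => a (x :: List.ofFn η) * tauW G d (List.ofFn η) w)]
    simp
  show (∑ k ∈ Finset.range ((w.length + 1) + 1),
      ∑ η : Fin k → Letter m, a (List.ofFn η) * tauW G d (List.ofFn η) (z :: w)) = _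
  rw [Finset.sum_range_succ' _ (w.length + 1)]
  have h0 : ∑ η : Fin 0 → Letter m,
      a (List.ofFn η) * tauW G d (List.ofFn η) (z :: w) = 0 := by
    simp only [Fintype.sum_unique, List.ofFn_zero]
    show a [] * (fun _ : Word m => (0:ℝ)) (z :: w) = 0
    simp
  rw [h0, add_zero, Finset.sum_congr rfl hsucc, Finset.sum_add_distrib]
  congr 1
  rw [Finset.sum_comm]
  refine Finset.sum_congr rfl fun x _ => ?_
  have hpull : ∀ k ∈ Finset.range (w.length + 1),
      (∑ η : Fin k → Letter m, a (x :: List.ofFn η) * (G x z * sLW d x (List.ofFn η) w))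
      = G x z * ∑ η : Fin k → Letter m, a (x :: List.ofFn η) * sLW d x (List.ofFn η) w := by
    intro k _
    rw [Finset.mul_sum]
    exact Finset.sum_congr rfl fun η _ => by ring
  rw [Finset.sum_congr rfl hpull, ← Finset.mul_sum]
  congr 1
  cases x with
  | none =>
    show (∑ k ∈ Finset.range (w.length + 1), ∑ η : Fin k → Letter m,
        a (none :: List.ofFn η) * (fun _ : Word m => (0:ℝ)) w) = (fun _ : Word m => (0:ℝ)) w
    simp
  | some i =>
    show (∑ k ∈ Finset.range (w.length + 1), ∑ η : Fin k → Letter m,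
        a (some i :: List.ofFn η) * sh (indW (List.ofFn η)) (d i) w)
      = sh (der (some i) a) (d i) w
    rw [← sh_expand w (der (some i) a) (d i)]
    rfl

lemma Tser_sh (G : Letter m → Letter m → ℝ) (d : FPST m m) (a b : FPS m) (w : Word m) :
    Tser G d (sh a b) w = sh (Tser G d a) b w + sh a (Tser G d b) w := by
  induction w generalizing a b with
  | nil =>
    rw [Tser_nil, sh_nil, sh_nil, Tser_nil, Tser_nil]
    ring
  | cons z w ih =>
    rw [Tser_cons, sh_cons, sh_cons]
    have hda : der z (Tser G d a)
        = fun u => Tser G d (der z a) u + ∑ x : Letter m, G x z * sLS d x (der x a) u :=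
      funext fun u => Tser_cons G d a z u
    have hdb : der z (Tser G d b)
        = fun u => Tser G d (der z b) u + ∑ x : Letter m, G x z * sLS d x (der x b) u :=
      funext fun u => Tser_cons G d b z u
    have hdsh : der z (sh a b) = fun u => sh (der z a) b u + sh a (der z b) u := rfl
    rw [hda, hdb, hdsh, Tser_add, ih, ih, sh_add_left, sh_add_right]
    have hsa : sh (fun u => ∑ x : Letter m, G x z * sLS d x (der x a) u) b w
        = ∑ x : Letter m, G x z * sh (sLS d x (der x a)) b w := by
      rw [sh_sum_left]
      exact Finset.sum_congr rfl fun x _ => sh_smul_left _ _ _ _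
    have hsb : sh a (fun u => ∑ x : Letter m, G x z * sLS d x (der x b) u) w
        = ∑ x : Letter m, G x z * sh a (sLS d x (der x b)) w := by
      rw [sh_sum_right]
      refine Finset.sum_congr rfl fun x _ => ?_
      rw [sh_comm, sh_smul_left, sh_comm (sLS d x (der x b)) a]
    rw [hsa, hsb]
    have hkey : ∀ x : Letter m, G x z * sLS d x (der x (sh a b)) w
        = G x z * sh (sLS d x (der x a)) b w + G x z * sh a (sLS d x (der x b)) w := by
      intro x
      cases x with
      | none =>
        show G none z * (fun _ : Word m => (0:ℝ)) w
          = G none z * sh (fun _ => (0:ℝ)) b w + G none z * sh a (fun _ : Word m => (0:ℝ)) w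
        rw [sh_zero_left, sh_comm, sh_zero_left]
        simp
      | some i =>
        show G (some i) z * sh (der (some i) (sh a b)) (d i) w
          = G (some i) z * sh (sh (der (some i) a) (d i)) b w
            + G (some i) z * sh a (sh (der (some i) b) (d i)) w
        have h1 : der (some i) (sh a b)
            = fun u => sh (der (some i) a) b u + sh a (der (some i) b) u := rfl
        rw [h1, sh_add_left]
        have h2 : sh (sh (der (some i) a) b) (d i) w
            = sh (sh (der (some i) a) (d i)) b w := by
          rw [sh_assoc, sh_assoc]
          have : sh b (d i) = fun u => sh (d i) b u := funext fun u => sh_comm b (d i) u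
          rw [this]
        have h3 : sh (sh a (der (some i) b)) (d i) w
            = sh a (sh (der (some i) b) (d i)) w := sh_assoc _ _ _ _
        rw [h2, h3, mul_add]
    rw [Finset.sum_congr rfl fun x _ => hkey x, Finset.sum_add_distrib]
    ring

theorem main (G : Letter m → Letter m → ℝ)
    (c d h : FPST m m) :
    tri G (shT c d) h = shT (tri G c h) d + shT c (tri G d h) ∧
    ∀ k : Fin m, tri G (shAd c d k) h = shAd (tri G c h) d k + shAd c (tri G d h) k := by
  have htri : ∀ e : FPST m m, ∀ j : Fin m, tri G e h j = Tser G h (e j) :=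
    fun e j => funext fun w => tri_eq G e h j w
  have hTcong : ∀ p q : FPS m, p = q → Tser G h p = Tser G h q := fun p q hpq => by rw [hpq]
  constructor
  · funext j w
    show tri G (shT c d) h j w = shT (tri G c h) d j w + shT c (tri G d h) j w
    rw [tri_eq]
    show Tser G h (sh (c j) (d j)) w = sh (tri G c h j) (d j) w + sh (c j) (tri G d h j) w
    rw [htri c j, htri d j]
    exact Tser_sh G h (c j) (d j) w
  · intro k
    funext j w
    show tri G (shAd c d k) h j w = shAd (tri G c h) d k j w + shAd c (tri G d h) k j w
    rw [tri_eq]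
    show Tser G h (sh (c j) (d k)) w = sh (tri G c h j) (d k) w + sh (c j) (tri G d h k) w
    rw [htri c j, htri d k]
    exact Tser_sh G h (c j) (d k) w

end Proof17

open CFS CPL in
/-- For any linear map `g` on `span_ℝ(X)` (given by its coefficient
matrix `G`, i.e. `g(x) = Σ_y G x y · y`), the associated product `◁` on `ℝ_p^m⟨X⟩` is a
derivation in its left argument for the shuffle and all adorned shuffle products:
`(c ⧢ d) ◁ h = (c ◁ h) ⧢ d + c ⧢ (d ◁ h)` and
`(c ⧢_k d) ◁ h = (c ◁ h) ⧢_k d + c ⧢_k (d ◁ h)`. -/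
theorem tri_derivation (m : ℕ) (G : Letter m → Letter m → ℝ)
    (c d h : FPST m m) (hc : ProperPoly c) (hd : ProperPoly d) (hh : ProperPoly h) :
    tri G (shT c d) h = shT (tri G c h) d + shT c (tri G d h) ∧
    ∀ k : Fin m, tri G (shAd c d k) h = shAd (tri G c h) d k + shAd c (tri G d h) k := by
  exact Proof17.main G c d h
end

section
/- Let X = {x_0,...,x_m} and let g : span_ℝ(X) → span_ℝ(X) be the linear map with g(x_0) = 0 and g(x_i) = x_i for i = 1,...,m, and let ◁ be the associated product on the space ℝ_p^m⟨X⟩ of m-tuples of noncommutative polynomials with zero constant term (so (x_0 e_j) ◁ d = 0, (x_k e_j) ◁ d = x_k d_k e_j, (x_0 c) ◁ d = x_0(c ◁ d), and (x_k c) ◁ d = x_k(c ◁ d) + x_k(c ⧢_k d) for k = 1,...,m). Then: (1) ◁ is a right pre-Lie product on ℝ_p^m⟨X⟩; (2) (ℝ_p^m⟨X⟩, ⧢, ◁) is a right com-pre-Lie algebra, i.e., moreover (c ⧢ d) ◁ h = (c ◁ h) ⧢ d + c ⧢ (d ◁ h) for all c, d, h; consequently c • d := (c ◁ d) + (c ⧢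 d) is also a right pre-Lie product on ℝ_p^m⟨X⟩. -/
open scoped BigOperators

namespace PLAux
open CFS CPL

variable {m : ℕ}

noncomputable section

lemma sh_nil (a b : FPS m) : sh a b [] = a [] * b [] := rfl

lemma sh_cons (a b : FPS m) (x : Letter m) (u : Word m) :
    sh a b (x :: u) = sh (fun v => a (x :: v)) b u + sh a (fun v => b (x :: v)) u := rfl

lemma sh_zero_left : ∀ (w : Word m) (f : FPS m), sh (fun _ => (0:ℝ)) f w = 0 := by
  intro w
  induction w with
  | nil => intro f; simp [sh_nil]
  | cons x u ih => intro f; rw [sh_cons]; simp [ih]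

lemma sh_zero_right : ∀ (w : Word m) (f : FPS m), sh f (fun _ => (0:ℝ)) w = 0 := by
  intro w
  induction w with
  | nil => intro f; simp [sh_nil]
  | cons x u ih => intro f; rw [sh_cons]; simp [ih]

lemma sh_add_left : ∀ (w : Word m) (a b f : FPS m),
    sh (fun u => a u + b u) f w = sh a f w + sh b f w := by
  intro w
  induction w with
  | nil => intro a b f; simp [sh_nil]; ring
  | cons x u ih =>
    intro a b f
    rw [sh_cons, sh_cons a, sh_cons b]
    rw [ih, ih]
    ring

lemma sh_add_right : ∀ (w : Word m) (a b f : FPS m),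
    sh f (fun u => a u + b u) w = sh f a w + sh f b w := by
  intro w
  induction w with
  | nil => intro a b f; simp [sh_nil]; ring
  | cons x u ih =>
    intro a b f
    rw [sh_cons, sh_cons f a, sh_cons f b]
    rw [ih, ih]
    ring

lemma sh_comm : ∀ (w : Word m) (a b : FPS m), sh a b w = sh b a w := by
  intro w
  induction w with
  | nil => intro a b; simp [sh_nil]; ring
  | cons x u ih =>
    intro a b
    rw [sh_cons, sh_cons b a, ih (fun v => a (x :: v)) b, ih a (fun v => b (x :: v))]
    ring

lemma sh_assoc : ∀ (w : Word m) (a b c : FPS m), sh (sh a b) c w = sh a (sh b c) w := by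
  intro w
  induction w with
  | nil => intro a b c; simp [sh_nil]; ring
  | cons x u ih =>
    intro a b c
    rw [sh_cons, sh_cons a (sh b c)]
    have h1 : (fun v => sh a b (x :: v)) =
        fun v => sh (fun t => a (x :: t)) b v + sh a (fun t => b (x :: t)) v := rfl
    have h2 : (fun v => sh b c (x :: v)) =
        fun v => sh (fun t => b (x :: t)) c v + sh b (fun t => c (x :: t)) v := rfl
    rw [h1, h2, sh_add_left, sh_add_right, ih, ih, ih]
    ring

lemma sh_right_comm (w : Word m) (a b c : FPS m) :
    sh (sh a b) c w = sh (sh a c) b w := by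
  rw [sh_assoc, sh_assoc]
  have : (fun v => sh b c v) = fun v => sh c b v := by
    funext v; exact sh_comm v b c
  have hbc : sh b c = sh c b := by funext v; exact sh_comm v b c
  rw [hbc, ← sh_assoc]

/-- Scalar version of the product `◁`. -/
def trs : FPS m → FPST m m → FPS m
  | _, _, [] => 0
  | a, d, (none :: u) => trs (fun v => a (none :: v)) d u
  | a, d, (some p :: u) =>
      trs (fun v => a (some p :: v)) d u + sh (fun v => a (some p :: v)) (d p) u

lemma trs_nil (a : FPS m) (d : FPST m m) : trs a d [] = 0 := rfl

lemma trs_cons_none (a : FPS m) (d : FPST m m) (u : Word m) :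
    trs a d (none :: u) = trs (fun v => a (none :: v)) d u := rfl

lemma trs_cons_some (a : FPS m) (d : FPST m m) (p : Fin m) (u : Word m) :
    trs a d (some p :: u) =
      trs (fun v => a (some p :: v)) d u + sh (fun v => a (some p :: v)) (d p) u := rfl

lemma trs_zero_left (d : FPST m m) : ∀ (w : Word m), trs (fun _ => (0:ℝ)) d w = 0 := by
  intro w
  induction w with
  | nil => rfl
  | cons x u ih =>
    cases x with
    | none => rw [trs_cons_none]; exact ih
    | some p => rw [trs_cons_some]; rw [ih, sh_zero_left]; ring

lemma trs_add_left (d : FPST m m) : ∀ (w : Word m) (a b : FPS m),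
    trs (fun u => a u + b u) d w = trs a d w + trs b d w := by
  intro w
  induction w with
  | nil => intro a b; simp [trs_nil]
  | cons x u ih =>
    intro a b
    cases x with
    | none => rw [trs_cons_none, trs_cons_none a, trs_cons_none b]; exact ih _ _
    | some p =>
      rw [trs_cons_some, trs_cons_some a, trs_cons_some b, ih, sh_add_left]
      ring

lemma sh_add_left' (a b f : FPS m) (w : Word m) :
    sh (a + b) f w = sh a f w + sh b f w := sh_add_left w a b f

lemma sh_add_right' (a b f : FPS m) (w : Word m) :
    sh f (a + b) w = sh f a w + sh f b w := sh_add_right w a b f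

lemma trs_add_left' (a b : FPS m) (d : FPST m m) (w : Word m) :
    trs (a + b) d w = trs a d w + trs b d w := trs_add_left d w a b

lemma trs_add_right : ∀ (w : Word m) (a : FPS m) (d d' : FPST m m),
    trs a (d + d') w = trs a d w + trs a d' w := by
  intro w
  induction w with
  | nil => intro a d d'; simp [trs_nil]
  | cons x u ih =>
    intro a d d'
    cases x with
    | none => rw [trs_cons_none, trs_cons_none, trs_cons_none]; exact ih _ _ _
    | some p =>
      rw [trs_cons_some, trs_cons_some, trs_cons_some, ih]
      have : (d + d') p = d p + d' p := rfl
      rw [this, sh_add_right']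
      ring

/-- The scalar com-pre-Lie identity. -/
lemma comPreLieS (h : FPST m m) : ∀ (w : Word m) (a b : FPS m),
    trs (sh a b) h w = sh (trs a h) b w + sh a (trs b h) w := by
  intro w
  induction w with
  | nil =>
    intro a b
    rw [trs_nil, sh_nil, sh_nil, trs_nil, trs_nil]
    ring
  | cons x u ih =>
    intro a b
    cases x with
    | none =>
      rw [trs_cons_none, sh_cons (trs a h) b, sh_cons a (trs b h)]
      have e1 : (fun v => sh a b (none :: v)) =
          fun v => sh (fun t => a (none :: t)) b v + sh a (fun t => b (none :: t)) v := rfl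
      have e2 : (fun v => trs a h (none :: v)) = trs (fun t => a (none :: t)) h := rfl
      have e3 : (fun v => trs b h (none :: v)) = trs (fun t => b (none :: t)) h := rfl
      rw [e1, trs_add_left, e2, e3, ih, ih]
      ring
    | some p =>
      rw [trs_cons_some, sh_cons (trs a h) b, sh_cons a (trs b h)]
      have e1 : (fun v => sh a b (some p :: v)) =
          fun v => sh (fun t => a (some p :: t)) b v + sh a (fun t => b (some p :: t)) v := rfl
      have e2 : (fun v => trs a h (some p :: v)) =
          fun v => trs (fun t => a (some p :: t)) h v
            + sh (fun t => a (some p :: t)) (h p) v := rfl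
      have e3 : (fun v => trs b h (some p :: v)) =
          fun v => trs (fun t => b (some p :: t)) h v
            + sh (fun t => b (some p :: t)) (h p) v := rfl
      rw [e1, e2, e3, trs_add_left, sh_add_left, sh_add_left, sh_add_right, ih, ih]
      -- remaining: triple-shuffle rearrangements
      rw [sh_right_comm u (fun t => a (some p :: t)) b (h p)]
      rw [sh_assoc u a (fun t => b (some p :: t)) (h p)]
      ring

/-- The scalar pre-Lie identity. -/
lemma preLieS (d h : FPST m m) : ∀ (w : Word m) (a : FPS m),
    trs (trs a d) h w - trs a (fun p => trs (d p) h) w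
      = trs (trs a h) d w - trs a (fun p => trs (h p) d) w := by
  intro w
  induction w with
  | nil => intro a; rw [trs_nil, trs_nil, trs_nil, trs_nil]
  | cons x u ih =>
    intro a
    cases x with
    | none =>
      rw [trs_cons_none, trs_cons_none, trs_cons_none, trs_cons_none]
      have e1 : (fun v => trs a d (none :: v)) = trs (fun t => a (none :: t)) d := rfl
      have e2 : (fun v => trs a h (none :: v)) = trs (fun t => a (none :: t)) h := rfl
      rw [e1, e2]
      exact ih _
    | some p =>
      rw [trs_cons_some, trs_cons_some, trs_cons_some, trs_cons_some]
      have e1 : (fun v => trs a d (some p :: v)) =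
          fun v => trs (fun t => a (some p :: t)) d v
            + sh (fun t => a (some p :: t)) (d p) v := rfl
      have e2 : (fun v => trs a h (some p :: v)) =
          fun v => trs (fun t => a (some p :: t)) h v
            + sh (fun t => a (some p :: t)) (h p) v := rfl
      rw [e1, e2, trs_add_left, trs_add_left, sh_add_left, sh_add_left]
      rw [comPreLieS h u (fun t => a (some p :: t)) (d p)]
      rw [comPreLieS d u (fun t => a (some p :: t)) (h p)]
      have e3 := ih (fun t => a (some p :: t))
      rw [sh_right_comm u (fun t => a (some p :: t)) (d p) (h p)]
      linarith [e3]

/-- The delta series at a word. -/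
def dlt (η : Word m) : FPS m := fun u => if u = η then 1 else 0

lemma lc_zero (x : Letter m) : ∀ w : Word m, lc x (fun _ => (0:ℝ)) w = 0 := by
  intro w; cases w with
  | nil => rfl
  | cons y u => simp [lc]

lemma lc_add (x : Letter m) (f g : FPS m) : ∀ w : Word m,
    lc x f w + lc x g w = lc x (fun u => f u + g u) w := by
  intro w; cases w with
  | nil => simp [lc]
  | cons y u => simp only [lc]; split <;> simp

lemma dlt_cons (x : Letter m) (η : Word m) : dlt (x :: η) = lc x (dlt η) := by
  funext w
  cases w with
  | nil => simp [dlt, lc]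
  | cons y u =>
    simp only [dlt, lc, List.cons.injEq]
    by_cases hy : y = x
    · subst hy; simp
    · simp [hy]

lemma trs_dlt_nil (d : FPST m m) : ∀ w : Word m, trs (dlt []) d w = 0 := by
  intro w; cases w with
  | nil => rfl
  | cons y u =>
    cases y with
    | none =>
      rw [trs_cons_none]
      have : (fun v => dlt ([] : Word m) (none :: v)) = fun _ => (0:ℝ) := by
        funext v; simp [dlt]
      rw [this, trs_zero_left]
    | some p =>
      rw [trs_cons_some]
      have : (fun v => dlt ([] : Word m) (some p :: v)) = fun _ => (0:ℝ) := by
        funext v; simp [dlt]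
      rw [this, trs_zero_left, sh_zero_left]; ring

lemma trs_lc_none (e : FPS m) (d : FPST m m) : ∀ w : Word m,
    trs (lc none e) d w = lc none (trs e d) w := by
  intro w; cases w with
  | nil => rfl
  | cons y u =>
    cases y with
    | none =>
      rw [trs_cons_none]
      have : (fun v => lc (none : Letter m) e (none :: v)) = e := by funext v; simp [lc]
      rw [this]; simp [lc]
    | some q =>
      rw [trs_cons_some]
      have : (fun v => lc (none : Letter m) e (some q :: v)) = fun _ => (0:ℝ) := by
        funext v; simp [lc]
      rw [this, trs_zero_left, sh_zero_left]; simp [lc]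

lemma trs_lc_some (e : FPS m) (d : FPST m m) (p : Fin m) : ∀ w : Word m,
    trs (lc (some p) e) d w = lc (some p) (fun u => trs e d u + sh e (d p) u) w := by
  intro w; cases w with
  | nil => rfl
  | cons y u =>
    cases y with
    | none =>
      rw [trs_cons_none]
      have : (fun v => lc (some p : Letter m) e (none :: v)) = fun _ => (0:ℝ) := by
        funext v; simp [lc]
      rw [this, trs_zero_left]; simp [lc]
    | some q =>
      rw [trs_cons_some]
      by_cases hq : q = p
      · subst hq
        have : (fun v => lc (some q : Letter m) e (some q :: v)) = e := by
          funext v; simp [lc]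
        rw [this]; simp [lc]
      · have : (fun v => lc (some p : Letter m) e (some q :: v)) = fun _ => (0:ℝ) := by
          funext v; simp [lc, hq]
        rw [this, trs_zero_left, sh_zero_left]
        simp [lc, hq]

lemma sh_vanish : ∀ (w : Word m) (a f : FPS m),
    (∀ v : Word m, v.length ≤ w.length → a v = 0) → sh a f w = 0 := by
  intro w
  induction w with
  | nil => intro a f hv; rw [sh_nil, hv [] (by simp)]; ring
  | cons x u ih =>
    intro a f hv
    rw [sh_cons]
    rw [ih (fun v => a (x :: v)) f (fun v hv' => hv (x :: v) (by simpa using hv')),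
        ih a (fun v => f (x :: v)) (fun v hv' => hv v (le_trans hv' (Nat.le_succ _)))]
    ring

lemma sh_dlt_big (η : Word m) (f : FPS m) (w : Word m) (h : w.length < η.length) :
    sh (dlt η) f w = 0 := by
  apply sh_vanish
  intro v hv
  have : v ≠ η := by intro e; subst e; omega
  simp [dlt, this]

lemma sum_fn_succ {L : Type} [Fintype L] (k : ℕ) (F : (Fin (k+1) → L) → ℝ) :
    ∑ η : Fin (k+1) → L, F η = ∑ x : L, ∑ η : Fin k → L, F (Fin.cons x η) := by
  rw [← Equiv.sum_comp (Fin.consEquiv (fun _ : Fin (k+1) => L)) F, Fintype.sum_prod_type]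
  rfl

lemma sum_fn_zero {L : Type} [Fintype L] (F : (Fin 0 → L) → ℝ) :
    ∑ η : Fin 0 → L, F η = F (fun i => i.elim0) := by
  apply Finset.sum_eq_single (fun i : Fin 0 => i.elim0)
  · intro b _ hb; exact absurd (funext fun i => i.elim0) hb
  · intro h; exact absurd (Finset.mem_univ _) h

lemma collapse {L : Type} [Fintype L] (x : L) (G : L → ℝ)
    (h : ∀ y, y ≠ x → G y = 0) : ∑ y : L, G y = G x :=
  Finset.sum_eq_single x (fun b _ hb => h b hb) (fun h' => absurd (Finset.mem_univ _) h')

lemma ofFn_elim0 {L : Type} : List.ofFn (fun i : Fin 0 => (i.elim0 : L)) = [] :=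
  List.ofFn_zero

lemma ofFn_cons {L : Type} {k : ℕ} (y : L) (η : Fin k → L) :
    List.ofFn (Fin.cons y η : Fin (k+1) → L) = y :: List.ofFn η := by
  simp [List.ofFn_succ]

lemma dlt_head_same (x : Letter m) (E : Word m) :
    (fun v => dlt (x :: E) (x :: v)) = dlt E := by
  funext v; simp [dlt]

lemma dlt_head_ne {y x : Letter m} (E : Word m) (h : y ≠ x) :
    (fun v => dlt (y :: E) (x :: v)) = fun _ => (0:ℝ) := by
  funext v; simp [dlt, List.cons.injEq, Ne.symm h]

lemma sh_expand : ∀ (w : Word m) (a f : FPS m),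
    sh a f w = ∑ k ∈ Finset.range (w.length + 1), ∑ η : Fin k → Letter m,
      a (List.ofFn η) * sh (dlt (List.ofFn η)) f w := by
  intro w
  induction w with
  | nil =>
    intro a f
    rw [List.length_nil, Finset.sum_range_one, sum_fn_zero, ofFn_elim0, sh_nil, sh_nil]
    simp [dlt]
  | cons x u ih =>
    intro a f
    have hsplit : ∀ k ∈ Finset.range (u.length + 1 + 1),
        (∑ η : Fin k → Letter m, a (List.ofFn η) * sh (dlt (List.ofFn η)) f (x :: u))
          = (∑ η : Fin k → Letter m,
              a (List.ofFn η) * sh (fun v => dlt (List.ofFn η) (x :: v)) f u)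
            + (∑ η : Fin k → Letter m,
              a (List.ofFn η) * sh (dlt (List.ofFn η)) (fun v => f (x :: v)) u) := by
      intro k _
      rw [← Finset.sum_add_distrib]
      exact Finset.sum_congr rfl (fun η _ => by rw [sh_cons]; ring)
    have hP : (∑ k ∈ Finset.range (u.length + 1 + 1), ∑ η : Fin k → Letter m,
          a (List.ofFn η) * sh (fun v => dlt (List.ofFn η) (x :: v)) f u)
        = ∑ k ∈ Finset.range (u.length + 1), ∑ η : Fin k → Letter m,
            a (x :: List.ofFn η) * sh (dlt (List.ofFn η)) f u := by
      rw [Finset.sum_range_succ']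
      have h0 : (∑ η : Fin 0 → Letter m,
          a (List.ofFn η) * sh (fun v => dlt (List.ofFn η) (x :: v)) f u) = 0 := by
        rw [sum_fn_zero]
        have hz : (fun v => dlt (List.ofFn (fun i : Fin 0 => (i.elim0 : Letter m))) ((x : Letter m) :: v))
            = fun _ => (0:ℝ) := by
          funext v; simp [dlt, ofFn_elim0]
        rw [hz, sh_zero_left, mul_zero]
      rw [h0, add_zero]
      apply Finset.sum_congr rfl
      intro k _
      rw [sum_fn_succ]
      refine (collapse x _ ?_).trans ?_
      · intro y hy
        exact Finset.sum_eq_zero (fun η _ => by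
          rw [ofFn_cons, dlt_head_ne _ hy, sh_zero_left, mul_zero])
      · exact Finset.sum_congr rfl (fun η _ => by rw [ofFn_cons, dlt_head_same])
    have hQ : (∑ k ∈ Finset.range (u.length + 1 + 1), ∑ η : Fin k → Letter m,
          a (List.ofFn η) * sh (dlt (List.ofFn η)) (fun v => f (x :: v)) u)
        = ∑ k ∈ Finset.range (u.length + 1), ∑ η : Fin k → Letter m,
            a (List.ofFn η) * sh (dlt (List.ofFn η)) (fun v => f (x :: v)) u := by
      rw [Finset.sum_range_succ]
      have hz : (∑ η : Fin (u.length + 1) → Letter m,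
          a (List.ofFn η) * sh (dlt (List.ofFn η)) (fun v => f (x :: v)) u) = 0 :=
        Finset.sum_eq_zero (fun η _ => by
          rw [sh_dlt_big _ _ _ (by simp), mul_zero])
      rw [hz, add_zero]
    rw [show ((x :: u).length + 1) = u.length + 1 + 1 from by simp]
    rw [Finset.sum_congr rfl hsplit, Finset.sum_add_distrib, hP, hQ]
    rw [sh_cons, ih (fun v => a (x :: v)) f, ih a (fun v => f (x :: v))]

lemma trs_expand (d : FPST m m) : ∀ (w : Word m) (a : FPS m),
    trs a d w = ∑ k ∈ Finset.range (w.length + 1), ∑ η : Fin k → Letter m,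
      a (List.ofFn η) * trs (dlt (List.ofFn η)) d w := by
  intro w
  induction w with
  | nil =>
    intro a
    rw [List.length_nil, Finset.sum_range_one, sum_fn_zero, ofFn_elim0, trs_nil, trs_nil,
      mul_zero]
  | cons x u ih =>
    intro a
    cases x with
    | none =>
      have hP : (∑ k ∈ Finset.range (u.length + 1 + 1), ∑ η : Fin k → Letter m,
            a (List.ofFn η) * trs (fun v => dlt (List.ofFn η) (none :: v)) d u)
          = ∑ k ∈ Finset.range (u.length + 1), ∑ η : Fin k → Letter m,
              a (none :: List.ofFn η) * trs (dlt (List.ofFn η)) d u := by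
        rw [Finset.sum_range_succ']
        have h0 : (∑ η : Fin 0 → Letter m,
            a (List.ofFn η) * trs (fun v => dlt (List.ofFn η) (none :: v)) d u) = 0 := by
          rw [sum_fn_zero]
          have hz : (fun v => dlt (List.ofFn (fun i : Fin 0 => (i.elim0 : Letter m))) (((none : Letter m) : Letter m) :: v))
              = fun _ => (0:ℝ) := by
            funext v; simp [dlt, ofFn_elim0]
          rw [hz, trs_zero_left, mul_zero]
        rw [h0, add_zero]
        apply Finset.sum_congr rfl
        intro k _
        rw [sum_fn_succ]
        refine (collapse (none : Letter m) _ ?_).trans ?_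
        · intro y hy
          exact Finset.sum_eq_zero (fun η _ => by
            rw [ofFn_cons, dlt_head_ne _ hy, trs_zero_left, mul_zero])
        · exact Finset.sum_congr rfl (fun η _ => by rw [ofFn_cons, dlt_head_same])
      have hsplit : ∀ k ∈ Finset.range (u.length + 1 + 1),
          (∑ η : Fin k → Letter m, a (List.ofFn η) * trs (dlt (List.ofFn η)) d (none :: u))
            = (∑ η : Fin k → Letter m,
                a (List.ofFn η) * trs (fun v => dlt (List.ofFn η) (none :: v)) d u) := by
        intro k _
        exact Finset.sum_congr rfl (fun η _ => by rw [trs_cons_none])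
      rw [show ((none :: u : Word m).length + 1) = u.length + 1 + 1 from by simp]
      rw [Finset.sum_congr rfl hsplit, hP]
      rw [trs_cons_none, ih (fun v => a (none :: v))]
    | some p =>
      have hsplit : ∀ k ∈ Finset.range (u.length + 1 + 1),
          (∑ η : Fin k → Letter m,
              a (List.ofFn η) * trs (dlt (List.ofFn η)) d (some p :: u))
            = (∑ η : Fin k → Letter m,
                a (List.ofFn η) * trs (fun v => dlt (List.ofFn η) (some p :: v)) d u)
              + (∑ η : Fin k → Letter m,
                a (List.ofFn η) * sh (fun v => dlt (List.ofFn η) (some p :: v)) (d p) u) := by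
        intro k _
        rw [← Finset.sum_add_distrib]
        exact Finset.sum_congr rfl (fun η _ => by rw [trs_cons_some]; ring)
      have hP : (∑ k ∈ Finset.range (u.length + 1 + 1), ∑ η : Fin k → Letter m,
            a (List.ofFn η) * trs (fun v => dlt (List.ofFn η) (some p :: v)) d u)
          = ∑ k ∈ Finset.range (u.length + 1), ∑ η : Fin k → Letter m,
              a (some p :: List.ofFn η) * trs (dlt (List.ofFn η)) d u := by
        rw [Finset.sum_range_succ']
        have h0 : (∑ η : Fin 0 → Letter m,
            a (List.ofFn η) * trs (fun v => dlt (List.ofFn η) (some p :: v)) d u) = 0 := by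
          rw [sum_fn_zero]
          have hz : (fun v => dlt (List.ofFn (fun i : Fin 0 => (i.elim0 : Letter m))) (((some p : Letter m) : Letter m) :: v))
              = fun _ => (0:ℝ) := by
            funext v; simp [dlt, ofFn_elim0]
          rw [hz, trs_zero_left, mul_zero]
        rw [h0, add_zero]
        apply Finset.sum_congr rfl
        intro k _
        rw [sum_fn_succ]
        refine (collapse (some p : Letter m) _ ?_).trans ?_
        · intro y hy
          exact Finset.sum_eq_zero (fun η _ => by
            rw [ofFn_cons, dlt_head_ne _ hy, trs_zero_left, mul_zero])
        · exact Finset.sum_congr rfl (fun η _ => by rw [ofFn_cons, dlt_head_same])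
      have hS : (∑ k ∈ Finset.range (u.length + 1 + 1), ∑ η : Fin k → Letter m,
            a (List.ofFn η) * sh (fun v => dlt (List.ofFn η) (some p :: v)) (d p) u)
          = ∑ k ∈ Finset.range (u.length + 1), ∑ η : Fin k → Letter m,
              a (some p :: List.ofFn η) * sh (dlt (List.ofFn η)) (d p) u := by
        rw [Finset.sum_range_succ']
        have h0 : (∑ η : Fin 0 → Letter m,
            a (List.ofFn η) * sh (fun v => dlt (List.ofFn η) (some p :: v)) (d p) u) = 0 := by
          rw [sum_fn_zero]
          have hz : (fun v => dlt (List.ofFn (fun i : Fin 0 => (i.elim0 : Letter m))) (((some p : Letter m) : Letter m) :: v))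
              = fun _ => (0:ℝ) := by
            funext v; simp [dlt, ofFn_elim0]
          rw [hz, sh_zero_left, mul_zero]
        rw [h0, add_zero]
        apply Finset.sum_congr rfl
        intro k _
        rw [sum_fn_succ]
        refine (collapse (some p : Letter m) _ ?_).trans ?_
        · intro y hy
          exact Finset.sum_eq_zero (fun η _ => by
            rw [ofFn_cons, dlt_head_ne _ hy, sh_zero_left, mul_zero])
        · exact Finset.sum_congr rfl (fun η _ => by rw [ofFn_cons, dlt_head_same])
      rw [show ((some p :: u : Word m).length + 1) = u.length + 1 + 1 from by simp]
      rw [Finset.sum_congr rfl hsplit, Finset.sum_add_distrib, hP, hS]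
      rw [trs_cons_some, ih (fun v => a (some p :: v)),
        sh_expand u (fun v => a (some p :: v)) (d p)]

end

end PLAux

open CFS CPL in
/-- The linear map `g` with `g(x_0) = 0` and `g(x_i) = x_i` for `i = 1,...,m`,
given by its coefficient matrix. -/
noncomputable def G0 (m : ℕ) : CFS.Letter m → CFS.Letter m → ℝ
  | none, _ => 0
  | some i, y => if y = some i then 1 else 0

namespace PLAux
open CFS CPL

variable {m : ℕ}

noncomputable section

lemma gApp_none (q : FPST m m) (j : Fin m) (w : Word m) : gApp (G0 m) none q j w = 0 := by
  simp [gApp, G0]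

lemma gApp_some (p : Fin m) (q : FPST m m) (j : Fin m) (w : Word m) :
    gApp (G0 m) (some p) q j w = lc (some p) (q j) w := by
  simp only [gApp, G0]
  rw [Finset.sum_congr rfl (fun y (_ : y ∈ Finset.univ) => ite_mul (y = some p) 1 0 _)]
  simp [Finset.sum_ite_eq']

lemma basT_same (η : Word m) (i : Fin m) : basT η i i = dlt η := by
  funext u; simp [basT, dlt]

lemma basT_ne (η : Word m) {i j : Fin m} (h : i ≠ j) : basT η i j = fun _ => (0:ℝ) := by
  funext u; simp [basT, Ne.symm h]

lemma triW_eq (d : FPST m m) : ∀ (η : Word m) (i j : Fin m),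
    triW (G0 m) d η i j = fun w => if i = j then trs (dlt η) d w else 0 := by
  intro η
  induction η with
  | nil =>
    intro i j; funext w
    by_cases hij : i = j
    · simp [triW, hij, trs_dlt_nil d w]
    · simp [triW, hij]
  | cons x η ih =>
    intro i j; funext w
    have hu : triW (G0 m) d (x :: η) i j w
        = lc x (triW (G0 m) d η i j) w + gApp (G0 m) x (shL (basT η i) d x) j w := rfl
    rw [hu, ih i j]
    cases x with
    | none =>
      rw [gApp_none, add_zero]
      by_cases hij : i = j
      · simp only [hij, if_true]
        rw [dlt_cons, trs_lc_none]
      · simp only [hij, if_false]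
        rw [lc_zero]
    | some p =>
      rw [gApp_some]
      have hs : shL (basT η i) d (some p) j = sh (basT η i j) (d p) := rfl
      rw [hs]
      by_cases hij : i = j
      · subst hij
        rw [basT_same, dlt_cons, trs_lc_some, ← lc_add]
        simp
      · rw [basT_ne _ hij]
        have hz : sh (fun _ => (0:ℝ)) (d p) = fun _ => (0:ℝ) :=
          funext (fun v => sh_zero_left v (d p))
        rw [hz]
        simp only [hij, if_false]
        simp [lc_zero]

lemma tri_eq (c d : FPST m m) : tri (G0 m) c d = fun j => trs (c j) d := by
  funext j w
  show (∑ k ∈ Finset.range (w.length + 1), ∑ η : Fin k → Letter m, ∑ i : Fin m,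
      c i (List.ofFn η) * triW (G0 m) d (List.ofFn η) i j w) = trs (c j) d w
  rw [trs_expand d w (c j)]
  apply Finset.sum_congr rfl
  intro k _
  apply Finset.sum_congr rfl
  intro η _
  refine (collapse j (fun i => c i (List.ofFn η) * triW (G0 m) d (List.ofFn η) i j w) ?_).trans ?_
  · intro i hij
    show c i (List.ofFn η) * triW (G0 m) d (List.ofFn η) i j w = 0
    rw [triW_eq d (List.ofFn η) i j]
    simp [hij]
  · show c j (List.ofFn η) * triW (G0 m) d (List.ofFn η) j j w = _
    rw [triW_eq d (List.ofFn η) j j]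
    simp

end

end PLAux

open CFS CPL in
/-- For `g(x_0) = 0`, `g(x_i) = x_i`, the associated product `◁` on
`ℝ_p^m⟨X⟩` is right pre-Lie; `(ℝ_p^m⟨X⟩, ⧢, ◁)` is a right com-pre-Lie algebra; and
consequently `c • d := (c ◁ d) + (c ⧢ d)` is also right pre-Lie. -/
theorem feedback_comPreLie (m : ℕ) :
    (∀ c d h : FPST m m, ProperPoly c → ProperPoly d → ProperPoly h →
      tri (G0 m) (tri (G0 m) c d) h - tri (G0 m) c (tri (G0 m) d h)
        = tri (G0 m) (tri (G0 m) c h) d - tri (G0 m) c (tri (G0 m) h d)) ∧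
    (∀ c d h : FPST m m, ProperPoly c → ProperPoly d → ProperPoly h →
      tri (G0 m) (shT c d) h = shT (tri (G0 m) c h) d + shT c (tri (G0 m) d h)) ∧
    (∀ c d h : FPST m m, ProperPoly c → ProperPoly d → ProperPoly h →
      ((tri (G0 m) (tri (G0 m) c d + shT c d) h + shT (tri (G0 m) c d + shT c d) h)
        - (tri (G0 m) c (tri (G0 m) d h + shT d h) + shT c (tri (G0 m) d h + shT d h)))
      = ((tri (G0 m) (tri (G0 m) c h + shT c h) d + shT (tri (G0 m) c h + shT c h) d)
        - (tri (G0 m) c (tri (G0 m) h d + shT h d) + shT c (tri (G0 m) h d + shT h d)))) := by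
  refine ⟨?_, ?_, ?_⟩
  · intro c d h _ _ _
    funext j w
    simp only [Pi.sub_apply, PLAux.tri_eq]
    exact PLAux.preLieS d h w (c j)
  · intro c d h _ _ _
    funext j w
    simp only [PLAux.tri_eq, Pi.add_apply, shT]
    exact PLAux.comPreLieS h w (c j) (d j)
  · intro c d h _ _ _
    funext j w
    simp only [PLAux.tri_eq, Pi.add_apply, Pi.sub_apply, shT]
    simp only [PLAux.trs_add_left', PLAux.trs_add_right, PLAux.sh_add_left',
      PLAux.sh_add_right']
    rw [PLAux.comPreLieS h w (c j) (d j), PLAux.comPreLieS d w (c j) (h j)]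
    rw [show shT d h = shT h d from
      funext fun p => funext fun v => PLAux.sh_comm v (d p) (h p)]
    rw [PLAux.sh_assoc w (c j) (d j) (h j), PLAux.sh_assoc w (c j) (h j) (d j)]
    linarith [PLAux.preLieS d h w (c j)]
end
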